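/- arXiv:2405.05357 — 4 statements merged into one kernel-verified Lean document; each statement's English description precedes it below -/
import Mathlib

section
/- For all integers ℓ ≥ 1 and n ≥ ℓ + 2, the total number of ℓ-peaks, summed over all flattened Catalan words of length n, equals (3^(n − ℓ − 2)·(2n + 1 − 2ℓ) − 1)/4. -/
/-- `w : ℕ → ℕ` encodes a Catalan word of length `n` (0-indexed letters
`w 0, w 1, …, w (n-1)`): the first letter is `0`, each letter is at most the
previous one plus one, and `w` is normalized to vanish at positions `≥ n`. -/
def IsCatalanWord (n : ℕ) (w : ℕ → ℕ) : Prop :=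
  w 0 = 0 ∧ (∀ i, i + 1 < n → w (i + 1) ≤ w i + 1) ∧ ∀ i, n ≤ i → w i = 0

/-- `j` is the starting position of one of the maximal weakly increasing
contiguous subwords (runs of weak ascents) of the length-`n` word `w`. -/
def IsRunStart (n : ℕ) (w : ℕ → ℕ) (j : ℕ) : Prop :=
  j < n ∧ (j = 0 ∨ w j < w (j - 1))

/-- A word is flattened when the leading terms of its maximal weakly increasing
contiguous subwords, read from left to right, form a weakly increasing sequence. -/
def IsFlattened (n : ℕ) (w : ℕ → ℕ) : Prop :=
  ∀ i j, IsRunStart n w i → IsRunStart n w j → i ≤ j → w i ≤ w j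

/-- The set of flattened Catalan words of length `n`. -/
def FlatCat (n : ℕ) : Set (ℕ → ℕ) := {w | IsCatalanWord n w ∧ IsFlattened n w}

/-- Number of maximal strictly increasing contiguous subwords (runs of ascents):
`1 + #{ i : w_i ≥ w_{i+1} }`. -/
noncomputable def runsAsc (n : ℕ) (w : ℕ → ℕ) : ℕ :=
  1 + {i : ℕ | i + 1 < n ∧ w (i + 1) ≤ w i}.ncard

/-- Number of maximal weakly increasing contiguous subwords (runs of weak
ascents): `1 + #{ i : w_i > w_{i+1} }`. -/
noncomputable def wruns (n : ℕ) (w : ℕ → ℕ) : ℕ :=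
  1 + {i : ℕ | i + 1 < n ∧ w (i + 1) < w i}.ncard

/-- Number of maximal strictly decreasing contiguous subwords (runs of
descents): `1 + #{ i : w_i ≤ w_{i+1} }`. -/
noncomputable def runsDesc (n : ℕ) (w : ℕ → ℕ) : ℕ :=
  1 + {i : ℕ | i + 1 < n ∧ w i ≤ w (i + 1)}.ncard

/-- Number of maximal weakly decreasing contiguous subwords (runs of weak
descents): `1 + #{ i : w_i < w_{i+1} }`. -/
noncomputable def wrunsDesc (n : ℕ) (w : ℕ → ℕ) : ℕ :=
  1 + {i : ℕ | i + 1 < n ∧ w i < w (i + 1)}.ncard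

/-- An `ℓ`-valley `a b^ℓ (b+1)` (with `a > b`) occurring at position `i` of the
length-`n` word `w`. -/
def IsLValley (n : ℕ) (w : ℕ → ℕ) (ℓ i : ℕ) : Prop :=
  i + ℓ + 1 < n ∧ w (i + 1) < w i ∧ (∀ t, 1 ≤ t → t ≤ ℓ → w (i + t) = w (i + 1)) ∧
    w (i + ℓ + 1) = w (i + 1) + 1

/-- Number of `ℓ`-valleys of `w`. -/
noncomputable def lValleyCount (n : ℕ) (w : ℕ → ℕ) (ℓ : ℕ) : ℕ :=
  {i : ℕ | IsLValley n w ℓ i}.ncard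

/-- Number of valleys of `w` (all `ℓ`-valleys, `ℓ ≥ 1`). -/
noncomputable def valleyCount (n : ℕ) (w : ℕ → ℕ) : ℕ :=
  {p : ℕ × ℕ | 1 ≤ p.2 ∧ IsLValley n w p.2 p.1}.ncard

/-- A symmetric valley `a (a-1)^ℓ a` (with `ℓ ≥ 1`) occurring at position `i`. -/
def IsSymValley (n : ℕ) (w : ℕ → ℕ) (ℓ i : ℕ) : Prop :=
  i + ℓ + 1 < n ∧ w i = w (i + 1) + 1 ∧ (∀ t, 1 ≤ t → t ≤ ℓ → w (i + t) = w (i + 1)) ∧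
    w (i + ℓ + 1) = w i

/-- Number of symmetric valleys of `w` (over all `ℓ ≥ 1`). -/
noncomputable def symValleyCount (n : ℕ) (w : ℕ → ℕ) : ℕ :=
  {p : ℕ × ℕ | 1 ≤ p.2 ∧ IsSymValley n w p.2 p.1}.ncard

/-- An `ℓ`-peak `a (a+1)^ℓ b` (with `a ≥ b`) occurring at position `i` of the
length-`n` word `w`. -/
def IsLPeak (n : ℕ) (w : ℕ → ℕ) (ℓ i : ℕ) : Prop :=
  i + ℓ + 1 < n ∧ (∀ t, 1 ≤ t → t ≤ ℓ → w (i + t) = w i + 1) ∧ w (i + ℓ + 1) ≤ w i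

/-- Number of `ℓ`-peaks of `w`. -/
noncomputable def lPeakCount (n : ℕ) (w : ℕ → ℕ) (ℓ : ℕ) : ℕ :=
  {i : ℕ | IsLPeak n w ℓ i}.ncard

/-- Number of peaks of `w` (all `ℓ`-peaks, `ℓ ≥ 1`). -/
noncomputable def peakCount (n : ℕ) (w : ℕ → ℕ) : ℕ :=
  {p : ℕ × ℕ | 1 ≤ p.2 ∧ IsLPeak n w p.2 p.1}.ncard

/-- A symmetric peak `a (a+1)^ℓ a` (with `ℓ ≥ 1`) occurring at position `i`. -/
def IsSymPeak (n : ℕ) (w : ℕ → ℕ) (ℓ i : ℕ) : Prop :=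
  i + ℓ + 1 < n ∧ (∀ t, 1 ≤ t → t ≤ ℓ → w (i + t) = w i + 1) ∧ w (i + ℓ + 1) = w i

/-- Number of symmetric peaks of `w` (over all `ℓ ≥ 1`). -/
noncomputable def symPeakCount (n : ℕ) (w : ℕ → ℕ) : ℕ :=
  {p : ℕ × ℕ | 1 ≤ p.2 ∧ IsSymPeak n w p.2 p.1}.ncard

/-!
Let `x` be the last letter of a flattened Catalan word and `s` the first letter of its last
weakly increasing run; call `x - s` the rise of the word. The flattened words of length `n + 2`
arise, each exactly once, from those of length `n + 1` by appending a letter `y` with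
`s ≤ y ≤ x + 1`. Appending `x + 1` or `x` continues the last run and raises the rise by one or
keeps it; each of the `x - s` smaller letters starts a new run, of rise `0`, and creates a new
`ℓ`-peak exactly when the word ends with `a (a+1)^ℓ`. Summed over all words this gives linear
recurrences for the number of words, the total rise, the total number of `ℓ`-peaks, the total of
`ℓ`-peaks times rise, and the total rise of the words ending with `a (a+1)^ℓ`, whose closed forms
follow by induction.
-/

namespace FlatCatalan

open Finset Function

theorem sum_Icc_add_one_of_const_on_Ico {M : Type*} [AddCommMonoid M] {s x : ℕ} (h : s ≤ x)
    {F : ℕ → M} {c : M} (hF : ∀ z ∈ Ico s x, F z = c) :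
    ∑ y ∈ Icc s (x + 1), F y = (x - s) • c + F x + F (x + 1) := by
  rw [sum_Icc_succ_top (by omega), ← Ico_add_one_right_eq_Icc,
    sum_Ico_succ_top h, sum_congr rfl hF, sum_const, Nat.card_Ico]

def lastRunStartValue (w : ℕ → ℕ) : ℕ → ℕ
  | 0 => w 0
  | n + 1 => if w (n + 1) < w n then w (n + 1) else lastRunStartValue w n

variable {n : ℕ} {w w' : ℕ → ℕ}

theorem lastRunStartValue_le (w : ℕ → ℕ) : ∀ n, lastRunStartValue w n ≤ w n
  | 0 => le_rfl
  | n + 1 => by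
    rw [lastRunStartValue]
    split_ifs with h
    · exact le_rfl
    · exact (lastRunStartValue_le w n).trans (not_lt.mp h)

theorem lastRunStartValue_congr (h : ∀ i ≤ n, w i = w' i) :
    lastRunStartValue w n = lastRunStartValue w' n := by
  induction n with
  | zero => exact h 0 le_rfl
  | succ n ih =>
    rw [lastRunStartValue, lastRunStartValue, h n n.le_succ, h (n + 1) le_rfl,
      ih fun i hi => h i (hi.trans n.le_succ)]

theorem lastRunStartValue_update (v : ℕ → ℕ) (n y : ℕ) :
    lastRunStartValue (update v (n + 1) y) (n + 1) =
      if y < v n then y else lastRunStartValue v n := by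
  rw [lastRunStartValue, update_self, update_of_ne (by omega),
    lastRunStartValue_congr fun i hi => update_of_ne (by omega) _ _]

theorem isRunStart_add_two_iff {j : ℕ} :
    IsRunStart (n + 2) w j ↔ IsRunStart (n + 1) w j ∨ (j = n + 1 ∧ w (n + 1) < w n) := by
  unfold IsRunStart
  constructor
  · rintro ⟨hj, h⟩
    rcases Nat.lt_succ_iff_lt_or_eq.mp hj with hj | rfl
    · exact Or.inl ⟨hj, h⟩
    · exact Or.inr ⟨rfl, h.resolve_left (by omega)⟩
  · rintro (⟨hj, h⟩ | ⟨rfl, h⟩)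
    · exact ⟨by omega, h⟩
    · exact ⟨by omega, Or.inr h⟩

theorem exists_isRunStart_lastRunStartValue (w : ℕ → ℕ) (n : ℕ) :
    ∃ j, IsRunStart (n + 1) w j ∧ lastRunStartValue w n = w j ∧
      ∀ i, IsRunStart (n + 1) w i → i ≤ j := by
  induction n with
  | zero =>
    exact ⟨0, ⟨one_pos, Or.inl rfl⟩, rfl, fun i hi => Nat.lt_one_iff.mp hi.1 ▸ le_rfl⟩
  | succ n ih =>
    by_cases h : w (n + 1) < w n
    · refine ⟨n + 1, isRunStart_add_two_iff.mpr (Or.inr ⟨rfl, h⟩), if_pos h,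
        fun i hi => Nat.lt_succ_iff.mp hi.1⟩
    · obtain ⟨j, hj, hval, hmax⟩ := ih
      refine ⟨j, isRunStart_add_two_iff.mpr (Or.inl hj), (if_neg h).trans hval, fun i hi => ?_⟩
      rcases isRunStart_add_two_iff.mp hi with hi | ⟨-, hi⟩
      · exact hmax i hi
      · exact absurd hi h

theorem isGreatest_lastRunStartValue (hw : IsFlattened (n + 1) w) :
    IsGreatest (w '' {j | IsRunStart (n + 1) w j}) (lastRunStartValue w n) := by
  obtain ⟨j, hj, hval, hmax⟩ := exists_isRunStart_lastRunStartValue w n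
  refine ⟨⟨j, hj, hval.symm⟩, ?_⟩
  rintro _ ⟨i, hi, rfl⟩
  exact hval ▸ hw i j hi hj (hmax i hi)

theorem isFlattened_add_two_iff :
    IsFlattened (n + 2) w ↔
      IsFlattened (n + 1) w ∧ (w (n + 1) < w n → lastRunStartValue w n ≤ w (n + 1)) := by
  have hlast : IsRunStart (n + 2) w (n + 1) ↔ w (n + 1) < w n := by
    simp [IsRunStart]
  constructor
  · intro hw
    have hw' : IsFlattened (n + 1) w := fun i j hi hj hij =>
      hw i j (isRunStart_add_two_iff.mpr (Or.inl hi)) (isRunStart_add_two_iff.mpr (Or.inl hj)) hij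
    refine ⟨hw', fun h => ?_⟩
    obtain ⟨j, hj, hval, -⟩ := exists_isRunStart_lastRunStartValue w n
    exact hval ▸ hw j (n + 1) (isRunStart_add_two_iff.mpr (Or.inl hj)) (hlast.mpr h) hj.1.le
  · rintro ⟨hw, hnew⟩ i j hi hj hij
    rcases isRunStart_add_two_iff.mp hj with hj | ⟨rfl, hjn⟩
    · rcases isRunStart_add_two_iff.mp hi with hi | ⟨rfl, -⟩
      · exact hw i j hi hj hij
      · exact absurd hj.1 (by omega)
    · rcases isRunStart_add_two_iff.mp hi with hi | ⟨rfl, -⟩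
      · exact ((isGreatest_lastRunStartValue hw).2 ⟨i, hi, rfl⟩).trans (hnew hjn)
      · exact le_rfl

theorem isFlattened_congr (h : ∀ i < n, w i = w' i) : IsFlattened n w ↔ IsFlattened n w' := by
  have hrs : ∀ j, IsRunStart n w j ↔ IsRunStart n w' j := fun j => by
    unfold IsRunStart
    constructor <;> rintro ⟨hj, hs⟩ <;> refine ⟨hj, ?_⟩
    · rwa [← h j hj, ← h (j - 1) (by omega)]
    · rwa [h j hj, h (j - 1) (by omega)]
  constructor <;> intro hw i j hi hj hij
  · rw [← h i (hrs i |>.mpr hi).1, ← h j (hrs j |>.mpr hj).1]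
    exact hw i j ((hrs i).mpr hi) ((hrs j).mpr hj) hij
  · rw [h i hi.1, h j hj.1]
    exact hw i j ((hrs i).mp hi) ((hrs j).mp hj) hij

theorem isCatalanWord_add_two_iff :
    IsCatalanWord (n + 2) w ↔
      IsCatalanWord (n + 1) (update w (n + 1) 0) ∧ w (n + 1) ≤ w n + 1 := by
  simp only [IsCatalanWord, update_apply]
  constructor
  · rintro ⟨h0, hstep, htail⟩
    refine ⟨⟨by simpa using h0, fun i hi => ?_, fun i hi => ?_⟩, hstep n (by omega)⟩
    · simpa [show i ≠ n by omega, show i ≠ n + 1 by omega] using hstep i (by omega)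
    · split_ifs
      · rfl
      · exact htail i (by omega)
  · rintro ⟨⟨h0, hstep, htail⟩, hlast⟩
    refine ⟨by simpa using h0, fun i hi => ?_, fun i hi => ?_⟩
    · rcases Nat.lt_succ_iff_lt_or_eq.mp hi with hi | hi
      · simpa [show i ≠ n by omega, show i ≠ n + 1 by omega] using hstep i hi
      · obtain rfl : i = n := by omega
        exact hlast
    · simpa [show i ≠ n + 1 by omega] using htail i (by omega)

theorem mem_flatCat_add_two_iff :
    w ∈ FlatCat (n + 2) ↔
      update w (n + 1) 0 ∈ FlatCat (n + 1) ∧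
        w (n + 1) ∈ Set.Icc (lastRunStartValue w n) (w n + 1) := by
  have hflat : IsFlattened (n + 1) (update w (n + 1) 0) ↔ IsFlattened (n + 1) w :=
    isFlattened_congr fun i hi => update_of_ne (by omega) _ _
  have hlow : (w (n + 1) < w n → lastRunStartValue w n ≤ w (n + 1)) ↔
      lastRunStartValue w n ≤ w (n + 1) :=
    ⟨fun h => (lt_or_ge _ _).elim h ((lastRunStartValue_le w n).trans), fun h _ => h⟩
  simp only [FlatCat, Set.mem_ofPred_eq, isCatalanWord_add_two_iff, isFlattened_add_two_iff,
    hflat, hlow, Set.mem_Icc]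
  tauto

theorem flatCat_add_two :
    FlatCat (n + 2) =
      ⋃ v ∈ FlatCat (n + 1), update v (n + 1) '' Set.Icc (lastRunStartValue v n) (v n + 1) := by
  ext w
  simp only [Set.mem_iUnion, Set.mem_image, exists_prop]
  constructor
  · intro hw
    obtain ⟨hv, hy⟩ := mem_flatCat_add_two_iff.mp hw
    refine ⟨_, hv, w (n + 1), ?_, by rw [update_idem, update_eq_self]⟩
    rwa [update_of_ne (by omega), lastRunStartValue_congr fun i hi => update_of_ne (by omega) _ _]
  · rintro ⟨v, hv, y, hy, rfl⟩
    have hv0 : v (n + 1) = 0 := hv.1.2.2 (n + 1) le_rfl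
    refine mem_flatCat_add_two_iff.mpr ⟨?_, ?_⟩
    · rwa [update_idem, update_eq_self_iff.mpr hv0.symm]
    · rwa [update_self, update_of_ne (by omega),
        lastRunStartValue_congr fun i hi => update_of_ne (by omega) _ _]

theorem flatCat_one : FlatCat 1 = {0} := by
  ext w
  refine ⟨fun hw => funext fun i => ?_, ?_⟩
  · rcases i with _ | i
    exacts [hw.1.1, hw.1.2.2 _ (by omega)]
  · rintro rfl
    exact ⟨⟨rfl, fun _ _ => Nat.zero_le _, fun _ _ => rfl⟩, fun _ _ _ _ _ => le_rfl⟩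

theorem flatCat_finite : ∀ n, (FlatCat n).Finite
  | 0 => (Set.finite_singleton 0).subset fun _ hw => funext fun i => hw.1.2.2 i i.zero_le
  | 1 => flatCat_one ▸ Set.finite_singleton 0
  | n + 2 => flatCat_add_two ▸
      (flatCat_finite (n + 1)).biUnion fun _ _ => (Set.finite_Icc _ _).image _

noncomputable def flatCatFinset (n : ℕ) : Finset (ℕ → ℕ) := (flatCat_finite n).toFinset

theorem flatCatFinset_one : flatCatFinset 1 = {0} := by
  ext w
  simp [flatCatFinset, flatCat_one]

theorem sum_flatCatFinset_add_two {M : Type*} [AddCommMonoid M] (f : (ℕ → ℕ) → M) :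
    ∑ w ∈ flatCatFinset (n + 2), f w =
      ∑ v ∈ flatCatFinset (n + 1),
        ∑ y ∈ Icc (lastRunStartValue v n) (v n + 1), f (update v (n + 1) y) := by
  have hdisj : (FlatCat (n + 1)).PairwiseDisjoint
      fun v => update v (n + 1) '' Set.Icc (lastRunStartValue v n) (v n + 1) := by
    refine fun v hv v' hv' hne => Set.disjoint_left.mpr ?_
    rintro _ ⟨y, -, rfl⟩ ⟨y', -, heq⟩
    apply hne
    have := congrArg (update · (n + 1) 0) heq
    simp only [update_idem] at this
    rwa [update_eq_self_iff.mpr (hv'.1.2.2 _ le_rfl).symm,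
      update_eq_self_iff.mpr (hv.1.2.2 _ le_rfl).symm, eq_comm] at this
  simp only [flatCatFinset, ← finsum_mem_eq_finite_toFinset_sum]
  rw [flatCat_add_two, finsum_mem_biUnion hdisj (flatCat_finite _)
    fun _ _ => (Set.finite_Icc _ _).image _]
  refine finsum_mem_congr rfl fun v _ => ?_
  rw [finsum_mem_image (update_injective _ _).injOn, ← coe_Icc, finsum_mem_coe_finset]

def lastRunRise (w : ℕ → ℕ) (n : ℕ) : ℕ := w n - lastRunStartValue w n

variable {v : ℕ → ℕ} {y : ℕ}

theorem sum_Icc_lastRunStartValue_eq {M : Type*} [AddCommMonoid M] (v : ℕ → ℕ) (n : ℕ)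
    {G : ℕ → M} {c : M} (hdown : ∀ y < v n, G y = c) :
    ∑ y ∈ Icc (lastRunStartValue v n) (v n + 1), G y =
      lastRunRise v n • c + G (v n) + G (v n + 1) :=
  sum_Icc_add_one_of_const_on_Ico (lastRunStartValue_le v n) fun y hy =>
    hdown y (mem_Ico.mp hy).2

theorem lastRunRise_update_of_lt (hy : y < v n) :
    lastRunRise (update v (n + 1) y) (n + 1) = 0 := by
  rw [lastRunRise, lastRunStartValue_update, if_pos hy, update_self, Nat.sub_self]

theorem lastRunRise_update_self :
    lastRunRise (update v (n + 1) (v n)) (n + 1) = lastRunRise v n := by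
  rw [lastRunRise, lastRunStartValue_update, if_neg (lt_irrefl _), update_self, lastRunRise]

theorem lastRunRise_update_add_one :
    lastRunRise (update v (n + 1) (v n + 1)) (n + 1) = lastRunRise v n + 1 := by
  have := lastRunStartValue_le v n
  rw [lastRunRise, lastRunStartValue_update, if_neg (by omega), update_self, lastRunRise]
  omega

def IsRisingPlateau (w : ℕ → ℕ) (ℓ i : ℕ) : Prop :=
  ∀ t, 1 ≤ t → t ≤ ℓ → w (i + t) = w i + 1

def EndsWithPlateau (w : ℕ → ℕ) (ℓ n : ℕ) : Prop :=
  ℓ ≤ n ∧ IsRisingPlateau w ℓ (n - ℓ)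

instance (w : ℕ → ℕ) (ℓ i : ℕ) : Decidable (IsRisingPlateau w ℓ i) :=
  inferInstanceAs (Decidable (∀ t, 1 ≤ t → t ≤ ℓ → _))

instance (w : ℕ → ℕ) (ℓ n : ℕ) : Decidable (EndsWithPlateau w ℓ n) :=
  inferInstanceAs (Decidable (_ ∧ _))

variable {ℓ i : ℕ}

theorem isRisingPlateau_update {k : ℕ} (h : i + ℓ < k) :
    IsRisingPlateau (update v k y) ℓ i ↔ IsRisingPlateau v ℓ i := by
  refine forall_congr' fun t => imp_congr_right fun _ => imp_congr_right fun ht => ?_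
  rw [update_of_ne (by omega), update_of_ne (by omega)]

theorem isRisingPlateau_succ_iff :
    IsRisingPlateau w (ℓ + 1) i ↔ IsRisingPlateau w ℓ i ∧ w (i + (ℓ + 1)) = w i + 1 := by
  refine ⟨fun h => ⟨fun t h1 h2 => h t h1 (by omega), h _ (by omega) le_rfl⟩, ?_⟩
  rintro ⟨h, hlast⟩ t h1 h2
  rcases eq_or_lt_of_le h2 with rfl | h2
  exacts [hlast, h t h1 (by omega)]

theorem EndsWithPlateau.apply_sub_add_one (h : EndsWithPlateau w ℓ n) (hℓ : 1 ≤ ℓ) :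
    w (n - ℓ) + 1 = w n := by
  rw [← h.2 ℓ hℓ le_rfl, Nat.sub_add_cancel h.1]

theorem endsWithPlateau_one_update :
    EndsWithPlateau (update v (n + 1) y) 1 (n + 1) ↔ y = v n + 1 := by
  have h0 : IsRisingPlateau (update v (n + 1) y) 0 n := fun t h1 h2 => by omega
  rw [EndsWithPlateau, Nat.add_sub_cancel, isRisingPlateau_succ_iff, zero_add, update_self,
    update_of_ne (by omega)]
  exact ⟨fun h => h.2.2, fun h => ⟨by omega, h0, h⟩⟩

theorem endsWithPlateau_succ_update (hℓ : 1 ≤ ℓ) :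
    EndsWithPlateau (update v (n + 1) y) (ℓ + 1) (n + 1) ↔
      EndsWithPlateau v ℓ n ∧ y = v n := by
  unfold EndsWithPlateau
  rw [Nat.add_sub_add_right, isRisingPlateau_succ_iff]
  constructor
  · rintro ⟨hn, hp, hlast⟩
    have hp' := (isRisingPlateau_update (by omega)).mp hp
    refine ⟨⟨by omega, hp'⟩, ?_⟩
    rwa [show n - ℓ + (ℓ + 1) = n + 1 by omega, update_self,
      update_of_ne (by omega), EndsWithPlateau.apply_sub_add_one ⟨by omega, hp'⟩ hℓ] at hlast
  · rintro ⟨hw, rfl⟩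
    refine ⟨by omega, (isRisingPlateau_update (by omega)).mpr hw.2, ?_⟩
    rw [show n - ℓ + (ℓ + 1) = n + 1 by omega, update_self,
      update_of_ne (by omega), EndsWithPlateau.apply_sub_add_one hw hℓ]

theorem isLPeak_iff : IsLPeak n w ℓ i ↔
    i + ℓ + 1 < n ∧ IsRisingPlateau w ℓ i ∧ w (i + ℓ + 1) ≤ w i := Iff.rfl

theorem isLPeak_update_iff :
    IsLPeak (n + 2) (update v (n + 1) y) ℓ i ↔
      IsLPeak (n + 1) v ℓ i ∨ (i + ℓ = n ∧ IsRisingPlateau v ℓ i ∧ y ≤ v i) := by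
  rw [isLPeak_iff, isLPeak_iff]
  rcases lt_trichotomy (i + ℓ) n with h | rfl | h
  · rw [isRisingPlateau_update (by omega), update_of_ne (by omega), update_of_ne (by omega)]
    exact ⟨fun ⟨_, hp⟩ => Or.inl ⟨by omega, hp⟩,
      fun hp => hp.elim (fun ⟨_, hp⟩ => ⟨by omega, hp⟩) fun hp => absurd hp.1 h.ne⟩
  · rw [isRisingPlateau_update (by omega), update_self, update_of_ne (by omega)]
    exact ⟨fun ⟨_, hp⟩ => Or.inr ⟨rfl, hp⟩,
      fun hp => hp.elim (fun hp => absurd hp.1 (by omega)) fun ⟨_, hp⟩ => ⟨by omega, hp⟩⟩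
  · exact ⟨fun hp => absurd hp.1 (by omega), fun hp => hp.elim (fun hp => absurd hp.1 (by omega))
      fun hp => absurd hp.1 (by omega)⟩

theorem lPeakCount_update :
    lPeakCount (n + 2) (update v (n + 1) y) ℓ =
      lPeakCount (n + 1) v ℓ +
        if EndsWithPlateau v ℓ n ∧ y ≤ v (n - ℓ) then 1 else 0 := by
  have hfin : {i | IsLPeak (n + 1) v ℓ i}.Finite :=
    (Set.finite_Iio (n + 1)).subset fun i hi => by have := hi.1; simp only [Set.mem_Iio]; omega
  unfold lPeakCount
  split_ifs with hc
  · have hset : {i | IsLPeak (n + 2) (update v (n + 1) y) ℓ i} =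
        insert (n - ℓ) {i | IsLPeak (n + 1) v ℓ i} := by
      ext i
      simp only [Set.mem_insert_iff, Set.mem_ofPred_eq, isLPeak_update_iff]
      constructor
      · rintro (hp | ⟨hi, -⟩)
        exacts [Or.inr hp, Or.inl (by omega)]
      · rintro (rfl | hp)
        exacts [Or.inr ⟨Nat.sub_add_cancel hc.1.1, hc.1.2, hc.2⟩, Or.inl hp]
    rw [hset, Set.ncard_insert_of_notMem (fun hp => by have := hp.1; omega) hfin]
  · have hset :
        {i | IsLPeak (n + 2) (update v (n + 1) y) ℓ i} = {i | IsLPeak (n + 1) v ℓ i} := by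
      ext i
      simp only [Set.mem_ofPred_eq, isLPeak_update_iff, or_iff_left_iff_imp]
      rintro ⟨rfl, hp, hy⟩
      exact (hc ⟨⟨by omega, by rwa [Nat.add_sub_cancel]⟩, by rwa [Nat.add_sub_cancel]⟩).elim
    rw [hset, add_zero]

theorem lPeakCount_eq_zero (h : n ≤ ℓ + 1) : lPeakCount n w ℓ = 0 := by
  have hempty : {i | IsLPeak n w ℓ i} = ∅ :=
    Set.eq_empty_of_forall_notMem fun i hi => by have := hi.1; omega
  rw [lPeakCount, hempty, Set.ncard_empty]

theorem lPeakCount_update_of_le (hℓ : 1 ≤ ℓ) (hy : v n ≤ y) :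
    lPeakCount (n + 2) (update v (n + 1) y) ℓ = lPeakCount (n + 1) v ℓ := by
  rw [lPeakCount_update, if_neg fun hc => ?_, add_zero]
  have := hc.1.apply_sub_add_one hℓ
  omega

theorem lPeakCount_update_of_lt (hℓ : 1 ≤ ℓ) (hy : y < v n) :
    lPeakCount (n + 2) (update v (n + 1) y) ℓ =
      lPeakCount (n + 1) v ℓ + if EndsWithPlateau v ℓ n then 1 else 0 := by
  have hc : EndsWithPlateau v ℓ n ∧ y ≤ v (n - ℓ) ↔ EndsWithPlateau v ℓ n :=
    and_iff_left_of_imp fun h => by have := h.apply_sub_add_one hℓ; omega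
  simp only [lPeakCount_update, hc]

-- The totals run over the words of length `n + 1`, so `n` is the position of the last letter.

noncomputable def countFlat (n : ℕ) : ℚ := ∑ _w ∈ flatCatFinset (n + 1), 1

noncomputable def totalRise (n : ℕ) : ℚ :=
  ∑ w ∈ flatCatFinset (n + 1), (lastRunRise w n : ℚ)

noncomputable def totalPeaks (ℓ n : ℕ) : ℚ :=
  ∑ w ∈ flatCatFinset (n + 1), (lPeakCount (n + 1) w ℓ : ℚ)

noncomputable def totalPeaksRise (ℓ n : ℕ) : ℚ :=
  ∑ w ∈ flatCatFinset (n + 1), (lPeakCount (n + 1) w ℓ : ℚ) * lastRunRise w n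

noncomputable def totalPlateauRise (ℓ n : ℕ) : ℚ :=
  ∑ w ∈ flatCatFinset (n + 1), if EndsWithPlateau w ℓ n then (lastRunRise w n : ℚ) else 0

theorem countFlat_succ : countFlat (n + 1) = 2 * countFlat n + totalRise n := by
  rw [countFlat, sum_flatCatFinset_add_two, countFlat, totalRise, mul_sum, ← sum_add_distrib]
  refine sum_congr rfl fun v _ => ?_
  rw [sum_Icc_lastRunStartValue_eq v n (c := (1 : ℚ)) fun _ _ => rfl, nsmul_eq_mul]
  ring

theorem totalRise_succ : totalRise (n + 1) = countFlat n + 2 * totalRise n := by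
  rw [totalRise, sum_flatCatFinset_add_two, countFlat, totalRise, mul_sum, ← sum_add_distrib]
  refine sum_congr rfl fun v _ => ?_
  have hdown : ∀ y < v n, (lastRunRise (update v (n + 1) y) (n + 1) : ℚ) = 0 := fun y hy => by
    rw [lastRunRise_update_of_lt hy, Nat.cast_zero]
  rw [sum_Icc_lastRunStartValue_eq v n hdown, lastRunRise_update_self, lastRunRise_update_add_one]
  push_cast
  ring

theorem totalPeaks_succ (hℓ : 1 ≤ ℓ) :
    totalPeaks ℓ (n + 1) =
      2 * totalPeaks ℓ n + totalPeaksRise ℓ n + totalPlateauRise ℓ n := by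
  rw [totalPeaks, sum_flatCatFinset_add_two, totalPeaks, totalPeaksRise, totalPlateauRise,
    mul_sum, ← sum_add_distrib, ← sum_add_distrib]
  refine sum_congr rfl fun v _ => ?_
  rw [sum_Icc_lastRunStartValue_eq v n fun y hy => by rw [lPeakCount_update_of_lt hℓ hy],
    lPeakCount_update_of_le hℓ le_rfl, lPeakCount_update_of_le hℓ (Nat.le_succ _), nsmul_eq_mul]
  split_ifs <;> push_cast <;> ring

theorem totalPeaksRise_succ (hℓ : 1 ≤ ℓ) :
    totalPeaksRise ℓ (n + 1) = totalPeaks ℓ n + 2 * totalPeaksRise ℓ n := by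
  rw [totalPeaksRise, sum_flatCatFinset_add_two, totalPeaks, totalPeaksRise, mul_sum,
    ← sum_add_distrib]
  refine sum_congr rfl fun v _ => ?_
  have hdown : ∀ y < v n, (lPeakCount (n + 2) (update v (n + 1) y) ℓ : ℚ) *
      lastRunRise (update v (n + 1) y) (n + 1) = 0 := fun y hy => by
    rw [lastRunRise_update_of_lt hy, Nat.cast_zero, mul_zero]
  rw [sum_Icc_lastRunStartValue_eq v n hdown, lPeakCount_update_of_le hℓ le_rfl,
    lPeakCount_update_of_le hℓ (Nat.le_succ _), lastRunRise_update_self,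
    lastRunRise_update_add_one]
  push_cast
  ring

theorem totalPlateauRise_one_succ : totalPlateauRise 1 (n + 1) = countFlat n + totalRise n := by
  rw [totalPlateauRise, sum_flatCatFinset_add_two, countFlat, totalRise, ← sum_add_distrib]
  refine sum_congr rfl fun v _ => ?_
  have hdown : ∀ y < v n, (if EndsWithPlateau (update v (n + 1) y) 1 (n + 1) then
      (lastRunRise (update v (n + 1) y) (n + 1) : ℚ) else 0) = 0 := fun y hy => by
    rw [lastRunRise_update_of_lt hy, Nat.cast_zero, ite_self]
  rw [sum_Icc_lastRunStartValue_eq v n hdown,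
    if_neg (endsWithPlateau_one_update.not.mpr (by omega)),
    if_pos (endsWithPlateau_one_update.mpr rfl), lastRunRise_update_add_one]
  push_cast
  ring

theorem totalPlateauRise_succ (hℓ : 1 ≤ ℓ) :
    totalPlateauRise (ℓ + 1) (n + 1) = totalPlateauRise ℓ n := by
  rw [totalPlateauRise, sum_flatCatFinset_add_two, totalPlateauRise]
  refine sum_congr rfl fun v _ => ?_
  have hdown : ∀ y < v n, (if EndsWithPlateau (update v (n + 1) y) (ℓ + 1) (n + 1) then
      (lastRunRise (update v (n + 1) y) (n + 1) : ℚ) else 0) = 0 := fun y hy => by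
    rw [lastRunRise_update_of_lt hy, Nat.cast_zero, ite_self]
  have hflat : EndsWithPlateau (update v (n + 1) (v n)) (ℓ + 1) (n + 1) ↔ EndsWithPlateau v ℓ n :=
    (endsWithPlateau_succ_update hℓ).trans (and_iff_left rfl)
  have hup : ¬ EndsWithPlateau (update v (n + 1) (v n + 1)) (ℓ + 1) (n + 1) := fun h => by
    have := ((endsWithPlateau_succ_update hℓ).mp h).2
    omega
  rw [sum_Icc_lastRunStartValue_eq v n hdown, lastRunRise_update_self, if_neg hup, smul_zero,
    zero_add, add_zero]
  exact if_congr hflat rfl rfl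

theorem countFlat_add_totalRise (n : ℕ) : countFlat n + totalRise n = 3 ^ n := by
  induction n with
  | zero => simp [countFlat, totalRise, flatCatFinset_one, lastRunRise, lastRunStartValue]
  | succ n ih =>
    rw [countFlat_succ, totalRise_succ, pow_succ, ← ih]
    ring

theorem totalPlateauRise_eq (hℓ : 1 ≤ ℓ) (m : ℕ) :
    totalPlateauRise ℓ (ℓ + m) = 3 ^ m := by
  induction ℓ, hℓ using Nat.le_induction with
  | base => rw [add_comm, totalPlateauRise_one_succ, countFlat_add_totalRise]
  | succ ℓ hℓ ih => rw [add_right_comm, totalPlateauRise_succ hℓ, ih]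

theorem totalPeaks_eq (hℓ : 1 ≤ ℓ) (m : ℕ) :
    totalPeaks ℓ (ℓ + 1 + m) = (3 ^ m * (2 * m + 5) - 1) / 4 ∧
      totalPeaksRise ℓ (ℓ + 1 + m) = (3 ^ m * (2 * m - 1) + 1) / 4 := by
  induction m with
  | zero =>
    have hS : totalPeaks ℓ ℓ = 0 :=
      sum_eq_zero fun _ _ => by rw [lPeakCount_eq_zero le_rfl, Nat.cast_zero]
    have hM : totalPeaksRise ℓ ℓ = 0 :=
      sum_eq_zero fun _ _ => by rw [lPeakCount_eq_zero le_rfl, Nat.cast_zero, zero_mul]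
    have hE : totalPlateauRise ℓ ℓ = 1 := totalPlateauRise_eq hℓ 0
    rw [add_zero, totalPeaks_succ hℓ, totalPeaksRise_succ hℓ, hS, hM, hE]
    norm_num
  | succ m ih =>
    rw [← add_assoc, totalPeaks_succ hℓ, totalPeaksRise_succ hℓ, ih.1, ih.2,
      add_assoc ℓ 1 m, totalPlateauRise_eq hℓ]
    constructor <;> push_cast <;> ring

end FlatCatalan

open FlatCatalan

/-- For `ℓ ≥ 1` and `n ≥ ℓ + 2`, the total number of `ℓ`-peaks over all
flattened Catalan words of length `n` equals
`(3^(n - ℓ - 2)·(2n + 1 - 2ℓ) - 1)/4`. -/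
theorem flatCat_total_lPeaks (ℓ n : ℕ) (hℓ : 1 ≤ ℓ) (hn : ℓ + 2 ≤ n) :
    ((∑ᶠ w ∈ FlatCat n, lPeakCount n w ℓ : ℕ) : ℚ) =
      (3 ^ (n - ℓ - 2) * (2 * (n : ℚ) + 1 - 2 * (ℓ : ℚ)) - 1) / 4 := by
  obtain ⟨m, rfl⟩ : ∃ m, n = ℓ + 1 + m + 1 := ⟨n - ℓ - 2, by omega⟩
  have hsum :
      ((∑ᶠ w ∈ FlatCat (ℓ + 1 + m + 1), lPeakCount (ℓ + 1 + m + 1) w ℓ : ℕ) : ℚ) =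
        totalPeaks ℓ (ℓ + 1 + m) := by
    rw [finsum_mem_eq_finite_toFinset_sum _ (flatCat_finite _), Nat.cast_sum]
    rfl
  rw [hsum, (totalPeaks_eq hℓ m).1, show ℓ + 1 + m + 1 - ℓ - 2 = m by omega]
  push_cast
  ring
end

section
/- For every integer n ≥ 3, the total number of peaks, summed over all flattened Catalan words of length n, equals (3^(n−2) − 1)(n − 1)/4. -/
/-!
A descent `w (j + 1) < w j` of a flattened Catalan word ends exactly one peak: the letter just
before the plateau of value `w j` ending at `j` cannot be larger than `w j` (the plateau and the
descent would start two runs with decreasing leading terms), so by the Catalan condition it is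
`w j - 1`. Hence the total number of peaks is the total number of descents.

A flattened word `w` of length `n + 1` extends to one of length `n + 2` exactly by appending a
letter `x` with `m ≤ x ≤ w n + 1`, where `m` is the leading term of the last run. With slack
`s = w n - m`, the `s` choices `x < w n` add a descent and give slack `0`, while `x = w n` and
`x = w n + 1` keep the descents and give slack `s` and `s + 1`. So the sums of `1`, `s`, `d` and
`d * s` over all words (`d` the number of descents) obey a linear recurrence, whose solution
involves `3 ^ n`.
-/

open Finset Function

theorem IsCatalanWord.apply_le {n : ℕ} {w : ℕ → ℕ} (hw : IsCatalanWord n w) (i : ℕ) :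
    w i ≤ i := by
  induction i with
  | zero => exact hw.1.le
  | succ k ih =>
    rcases lt_or_ge (k + 1) n with hk | hk
    · exact (hw.2.1 k hk).trans (by omega)
    · exact (hw.2.2 _ hk).trans_le (Nat.zero_le _)

namespace FlatCat

theorem finite (n : ℕ) : (FlatCat n).Finite := by
  refine (Set.finite_range fun g : Fin n → Fin (n + 1) => fun i =>
    if h : i < n then (g ⟨i, h⟩ : ℕ) else 0).subset fun w hw => ?_
  refine ⟨fun i => ⟨w i, Nat.lt_succ_of_le ((hw.1.apply_le i).trans i.2.le)⟩, ?_⟩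
  funext i
  dsimp only
  split_ifs with h
  · rfl
  · exact (hw.1.2.2 i (not_lt.mp h)).symm

noncomputable def toFinset (n : ℕ) : Finset (ℕ → ℕ) := (FlatCat.finite n).toFinset

@[simp]
theorem mem_toFinset {n : ℕ} {w : ℕ → ℕ} : w ∈ FlatCat.toFinset n ↔ w ∈ FlatCat n :=
  Set.Finite.mem_toFinset _

end FlatCat

instance (n : ℕ) (w : ℕ → ℕ) : DecidablePred (IsRunStart n w) :=
  fun _ => inferInstanceAs (Decidable (_ ∧ _))

/-- For a flattened word this is the leading term of the last run. -/
def maxRunStart (n : ℕ) (w : ℕ → ℕ) : ℕ := {j ∈ range n | IsRunStart n w j}.sup w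

def descents (n : ℕ) (w : ℕ → ℕ) : Finset ℕ := {j ∈ range (n - 1) | w (j + 1) < w j}

def slack (n : ℕ) (w : ℕ → ℕ) : ℕ := w (n - 1) - maxRunStart n w

theorem le_maxRunStart {n : ℕ} {w : ℕ → ℕ} {j : ℕ} (hj : IsRunStart n w j) :
    w j ≤ maxRunStart n w :=
  le_sup (mem_filter.mpr ⟨mem_range.mpr hj.1, hj⟩)

theorem maxRunStart_le_iff {n : ℕ} {w : ℕ → ℕ} {x : ℕ} :
    maxRunStart n w ≤ x ↔ ∀ j, IsRunStart n w j → w j ≤ x := by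
  simp only [maxRunStart, Finset.sup_le_iff, mem_filter, mem_range]
  exact ⟨fun h j hj => h j ⟨hj.1, hj⟩, fun h j hj => h j hj.2⟩

theorem IsFlattened.le_of_isRunStart {n : ℕ} {w : ℕ → ℕ} (hw : IsFlattened n w) {j k : ℕ}
    (hj : IsRunStart n w j) (hjk : j ≤ k) (hk : k < n) : w j ≤ w k := by
  induction k, hjk using Nat.le_induction with
  | base => rfl
  | succ k hjk ih =>
    by_cases hdesc : w (k + 1) < w k
    · exact hw j (k + 1) hj ⟨hk, Or.inr hdesc⟩ (by omega)
    · exact (ih (by omega)).trans (not_lt.mp hdesc)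

theorem IsFlattened.maxRunStart_le_last {n : ℕ} {w : ℕ → ℕ} (hw : IsFlattened (n + 1) w) :
    maxRunStart (n + 1) w ≤ w n :=
  maxRunStart_le_iff.mpr fun _ hj =>
    hw.le_of_isRunStart hj (Nat.lt_succ_iff.mp hj.1) n.lt_succ_self

section Append

variable {n : ℕ} {w : ℕ → ℕ} {x : ℕ}

theorem update_of_lt {i : ℕ} (hi : i < n + 1) : update w (n + 1) x i = w i :=
  update_of_ne hi.ne _ _

theorem isRunStart_update_iff {j : ℕ} :
    IsRunStart (n + 2) (update w (n + 1) x) j ↔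
      IsRunStart (n + 1) w j ∨ j = n + 1 ∧ x < w n := by
  rcases eq_or_ne j (n + 1) with rfl | hj
  · simp [IsRunStart]
  · simp only [IsRunStart, update_apply, hj, if_false, false_and, or_false]
    split_ifs <;> omega

theorem isCatalanWord_update_iff (hw : w (n + 1) = 0) :
    IsCatalanWord (n + 2) (update w (n + 1) x) ↔ IsCatalanWord (n + 1) w ∧ x ≤ w n + 1 := by
  constructor
  · rintro ⟨h0, hstep, hzero⟩
    refine ⟨⟨?_, fun i hi => ?_, fun i hi => ?_⟩, ?_⟩
    · rwa [update_of_lt n.succ_pos] at h0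
    · simpa only [update_of_lt hi, update_of_lt (i.lt_succ_self.trans hi)] using
        hstep i (by omega)
    · rcases hi.eq_or_lt with rfl | hi
      · exact hw
      · simpa only [update_of_ne hi.ne'] using hzero i hi
    · simpa only [update_self, update_of_lt n.lt_succ_self] using hstep n (by omega)
  · rintro ⟨⟨h0, hstep, hzero⟩, hx⟩
    refine ⟨by rwa [update_of_lt n.succ_pos], fun i hi => ?_, fun i hi => ?_⟩
    · rcases (Nat.lt_succ_iff.mp hi).lt_or_eq with hi | hi
      · rw [update_of_lt hi, update_of_lt (i.lt_succ_self.trans hi)]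
        exact hstep i hi
      · obtain rfl : i = n := by omega
        rwa [update_self, update_of_lt i.lt_succ_self]
    · rw [update_of_ne (by omega)]
      exact hzero i (by omega)

theorem isFlattened_update_iff :
    IsFlattened (n + 2) (update w (n + 1) x) ↔
      IsFlattened (n + 1) w ∧ (x < w n → maxRunStart (n + 1) w ≤ x) := by
  simp only [IsFlattened, isRunStart_update_iff]
  constructor
  · intro h
    refine ⟨fun i j hi hj hij => ?_, fun hx => maxRunStart_le_iff.mpr fun j hj => ?_⟩
    · simpa only [update_of_lt hi.1, update_of_lt hj.1] using
        h i j (Or.inl hi) (Or.inl hj) hij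
    · simpa only [update_of_lt hj.1, update_self] using
        h j (n + 1) (Or.inl hj) (Or.inr ⟨rfl, hx⟩) hj.1.le
  · rintro ⟨h, hmax⟩ i j (hi | ⟨rfl, hx⟩) (hj | ⟨rfl, hx⟩) hij
    · rw [update_of_lt hi.1, update_of_lt hj.1]
      exact h i j hi hj hij
    · rw [update_of_lt hi.1, update_self]
      exact (le_maxRunStart hi).trans (hmax hx)
    · exact absurd hj.1 (by omega)
    · rfl

theorem update_mem_flatCat_iff (hw : w (n + 1) = 0) :
    update w (n + 1) x ∈ FlatCat (n + 2) ↔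
      w ∈ FlatCat (n + 1) ∧ maxRunStart (n + 1) w ≤ x ∧ x ≤ w n + 1 := by
  simp only [FlatCat, Set.mem_ofPred_eq, isCatalanWord_update_iff hw, isFlattened_update_iff]
  constructor
  · rintro ⟨⟨hcat, hx⟩, hflat, hmax⟩
    refine ⟨⟨hcat, hflat⟩, ?_, hx⟩
    by_cases hxn : x < w n
    · exact hmax hxn
    · exact hflat.maxRunStart_le_last.trans (not_lt.mp hxn)
  · rintro ⟨⟨hcat, hflat⟩, hmax, hx⟩
    exact ⟨⟨hcat, hx⟩, hflat, fun _ => hmax⟩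

theorem maxRunStart_update (hx : maxRunStart (n + 1) w ≤ x) :
    maxRunStart (n + 2) (update w (n + 1) x) = if x < w n then x else maxRunStart (n + 1) w := by
  split_ifs with hxn
  · refine le_antisymm (maxRunStart_le_iff.mpr fun j hj => ?_) ?_
    · rcases isRunStart_update_iff.mp hj with hj | ⟨rfl, -⟩
      · rw [update_of_lt hj.1]
        exact (le_maxRunStart hj).trans hx
      · rw [update_self]
    · simpa using le_maxRunStart (isRunStart_update_iff.mpr (Or.inr ⟨rfl, hxn⟩))
  · refine le_antisymm (maxRunStart_le_iff.mpr fun j hj => ?_)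
      (maxRunStart_le_iff.mpr fun j hj => ?_)
    · rcases isRunStart_update_iff.mp hj with hj | ⟨rfl, hlt⟩
      · rw [update_of_lt hj.1]
        exact le_maxRunStart hj
      · exact absurd hlt hxn
    · rw [← update_of_lt (w := w) (x := x) hj.1]
      exact le_maxRunStart (isRunStart_update_iff.mpr (Or.inl hj))

theorem slack_update (hx : maxRunStart (n + 1) w ≤ x) :
    slack (n + 2) (update w (n + 1) x) = if x < w n then 0 else x - maxRunStart (n + 1) w := by
  rw [slack, maxRunStart_update hx, show n + 2 - 1 = n + 1 from rfl, update_self]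
  split_ifs <;> simp

theorem card_descents_update :
    #(descents (n + 2) (update w (n + 1) x)) =
      #(descents (n + 1) w) + if x < w n then 1 else 0 := by
  have hprefix : {j ∈ range n | update w (n + 1) x (j + 1) < update w (n + 1) x j} =
      {j ∈ range n | w (j + 1) < w j} :=
    filter_congr fun j hj => by
      have hj := mem_range.mp hj
      rw [update_of_lt (by omega), update_of_lt (by omega)]
  simp only [descents, show n + 2 - 1 = n + 1 from rfl, add_tsub_cancel_right, range_add_one,
    filter_insert, update_self, update_of_lt n.lt_succ_self, hprefix]
  split_ifs
  · rw [card_insert_of_notMem (by simp)]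
  · rfl

end Append

theorem sum_Icc_ite_lt {M : Type*} [AddCommMonoid M] {s a : ℕ} (h : s ≤ a) (c : M)
    (f : ℕ → M) :
    ∑ x ∈ Icc s (a + 1), (if x < a then c else f (x - s)) =
      (a - s) • c + f (a - s) + f (a - s + 1) := by
  rw [sum_Icc_succ_top (by omega), ← Ico_add_one_right_eq_Icc, sum_Ico_succ_top h,
    sum_congr rfl fun x hx => if_pos (mem_Ico.mp hx).2, sum_const, Nat.card_Ico,
    if_neg (lt_irrefl a), if_neg (by omega), show a + 1 - s = a - s + 1 by omega]

namespace FlatCat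

theorem sum_toFinset_add_two {M : Type*} [AddCommMonoid M] (n : ℕ) (F : (ℕ → ℕ) → M) :
    ∑ c ∈ FlatCat.toFinset (n + 2), F c =
      ∑ w ∈ FlatCat.toFinset (n + 1),
        ∑ x ∈ Icc (maxRunStart (n + 1) w) (w n + 1), F (update w (n + 1) x) := by
  rw [sum_sigma']
  refine sum_bij' (fun c _ => ⟨update c (n + 1) 0, c (n + 1)⟩)
    (fun p _ => update p.1 (n + 1) p.2) (fun c hc => ?_) (fun p hp => ?_) (fun c _ => by simp)
    (fun p hp => ?_) (fun c _ => by simp)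
  · have hc' : c = update (update c (n + 1) 0) (n + 1) (c (n + 1)) := by simp
    rw [FlatCat.mem_toFinset, hc', update_mem_flatCat_iff (update_self _ _ _)] at hc
    simpa only [mem_sigma, FlatCat.mem_toFinset, mem_Icc] using hc
  · rw [mem_sigma, FlatCat.mem_toFinset, mem_Icc] at hp
    rw [FlatCat.mem_toFinset, update_mem_flatCat_iff (hp.1.1.2.2 _ le_rfl)]
    exact ⟨hp.1, hp.2⟩
  · rw [mem_sigma, FlatCat.mem_toFinset] at hp
    rw [update_idem, update_self, update_eq_self_iff.mpr (hp.1.1.2.2 _ le_rfl).symm]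

noncomputable def statSum (n : ℕ) (G : ℕ → ℕ → ℚ) : ℚ :=
  ∑ w ∈ FlatCat.toFinset n, G #(descents n w) (slack n w)

theorem statSum_add_two (n : ℕ) (G : ℕ → ℕ → ℚ) :
    statSum (n + 2) G =
      statSum (n + 1) fun d s => s * G (d + 1) 0 + G d s + G d (s + 1) := by
  rw [statSum, sum_toFinset_add_two]
  refine sum_congr rfl fun w hw => ?_
  have hmax := (FlatCat.mem_toFinset.mp hw).2.maxRunStart_le_last
  calc ∑ x ∈ Icc (maxRunStart (n + 1) w) (w n + 1),
          G #(descents (n + 2) (update w (n + 1) x)) (slack (n + 2) (update w (n + 1) x))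
      = ∑ x ∈ Icc (maxRunStart (n + 1) w) (w n + 1),
          if x < w n then G (#(descents (n + 1) w) + 1) 0
          else G #(descents (n + 1) w) (x - maxRunStart (n + 1) w) := by
        refine sum_congr rfl fun x hx => ?_
        rw [card_descents_update, slack_update (mem_Icc.mp hx).1]
        split_ifs <;> rfl
    _ = _ := by
        rw [sum_Icc_ite_lt hmax, nsmul_eq_mul]
        simp [slack]

theorem statSum_one (G : ℕ → ℕ → ℚ) : statSum 1 G = G 0 0 := by
  have h : FlatCat.toFinset 1 = {0} := by
    refine eq_singleton_iff_unique_mem.mpr ⟨?_, fun w hw => ?_⟩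
    · rw [FlatCat.mem_toFinset]
      exact ⟨⟨rfl, fun i hi => by omega, fun _ _ => rfl⟩, fun _ _ _ _ _ => le_rfl⟩
    · rw [FlatCat.mem_toFinset] at hw
      funext i
      rcases i with _ | i
      · exact hw.1.1
      · exact hw.1.2.2 _ (by omega)
  simp [statSum, h, descents, slack]

theorem statSum_linear (n : ℕ) (a b c e : ℚ) :
    statSum (n + 1) (fun d s => a + b * s + c * d + e * (d * s)) =
      a * (3 ^ n + 1) / 2 + b * (3 ^ n - 1) / 2 + c * n * (3 ^ n - 3) / 12 +
        e * ((n - 3) * 3 ^ n + 3 * (n + 1)) / 12 := by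
  induction n generalizing a b c e with
  | zero => rw [statSum_one]; norm_num
  | succ n ih =>
    rw [statSum_add_two]
    convert ih (2 * a + b) (a + 2 * b + c) (2 * c + e) (c + 2 * e) using 1
    · congr 1
      funext d s
      push_cast
      ring
    · push_cast
      ring

end FlatCat

theorem exists_lt_ne_and_eq_of_ne (w : ℕ → ℕ) {j : ℕ} (h : w 0 ≠ w j) :
    ∃ i < j, w i ≠ w j ∧ ∀ m, i < m → m ≤ j → w m = w j := by
  induction j with
  | zero => exact absurd rfl h
  | succ j ih =>
    by_cases hj : w j = w (j + 1)
    · obtain ⟨i, hij, hi, hplateau⟩ := ih (hj ▸ h)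
      refine ⟨i, by omega, hj ▸ hi, fun m hm hmj => ?_⟩
      rcases hmj.lt_or_eq with hmj | rfl
      · rw [hplateau m hm (by omega), hj]
      · rfl
    · exact ⟨j, j.lt_succ_self, hj, fun m hm hmj => by rw [show m = j + 1 by omega]⟩

section Peaks

variable {n : ℕ} {w : ℕ → ℕ}

theorem IsLPeak.le_of_add_eq {ℓ i ℓ' i' : ℕ} (hp : IsLPeak n w ℓ i) (hp' : IsLPeak n w ℓ' i')
    (hℓ : 1 ≤ ℓ) (h : i + ℓ = i' + ℓ') : ℓ' ≤ ℓ := by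
  by_contra! hlt
  have h₁ := hp'.2.1 (ℓ' - ℓ) (by omega) (by omega)
  have h₂ := hp'.2.1 (ℓ' - ℓ + 1) (by omega) (by omega)
  rw [show i' + (ℓ' - ℓ) = i by omega] at h₁
  rw [show i' + (ℓ' - ℓ + 1) = i + 1 by omega] at h₂
  have := hp.2.1 1 le_rfl hℓ
  omega

theorem FlatCat.exists_isLPeak_of_descent {j : ℕ} (hw : w ∈ FlatCat n) (hj : j + 1 < n)
    (hdesc : w (j + 1) < w j) : ∃ i ℓ, 1 ≤ ℓ ∧ IsLPeak n w ℓ i ∧ i + ℓ = j := by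
  obtain ⟨⟨h0, hstep, -⟩, hflat⟩ := hw
  obtain ⟨i, hij, hi, hplateau⟩ := exists_lt_ne_and_eq_of_ne w (j := j) (by omega)
  have hstart : w (i + 1) = w j := hplateau (i + 1) (by omega) (by omega)
  have hup := hstep i (by omega)
  rcases lt_or_gt_of_ne hi with hi | hi
  · refine ⟨i, j - i, by omega, ⟨by omega, fun t ht htj => ?_, ?_⟩, by omega⟩
    · rw [hplateau (i + t) (by omega) (by omega)]
      omega
    · rw [show i + (j - i) + 1 = j + 1 by omega]
      omega
  · have := hflat (i + 1) (j + 1) ⟨by omega, Or.inr (by simpa [hstart] using hi)⟩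
      ⟨hj, Or.inr (by simpa using hdesc)⟩ (by omega)
    omega

theorem FlatCat.peakCount_eq_card_descents (hw : w ∈ FlatCat n) :
    peakCount n w = #(descents n w) := by
  rw [peakCount, ← Set.ncard_coe_finset]
  refine Set.ncard_congr (fun p _ => p.1 + p.2) (fun p ⟨hℓ, hlen, hplateau, hdrop⟩ => ?_)
    (fun ⟨i, ℓ⟩ ⟨i', ℓ'⟩ ⟨hℓ, hp⟩ ⟨hℓ', hp'⟩ h => ?_) (fun j hj => ?_)
  · have := hplateau p.2 hℓ le_rfl
    simp only [descents, coe_filter, mem_range, Set.mem_ofPred_eq]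
    omega
  · have := hp.le_of_add_eq hp' hℓ h
    have := hp'.le_of_add_eq hp hℓ' h.symm
    simp only [Prod.mk.injEq]
    omega
  · simp only [descents, coe_filter, mem_range, Set.mem_ofPred_eq] at hj
    obtain ⟨i, ℓ, hℓ, hp, rfl⟩ := FlatCat.exists_isLPeak_of_descent hw (by omega) hj.2
    exact ⟨(i, ℓ), ⟨hℓ, hp⟩, rfl⟩

end Peaks

theorem flatCat_total_peaks_general (n : ℕ) :
    ((∑ᶠ w ∈ FlatCat n, peakCount n w : ℕ) : ℚ) =
      (3 ^ (n - 2) - 1) * ((n : ℚ) - 1) / 4 := by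
  rcases n with _ | n
  · simp [peakCount, IsLPeak]
  have hpeaks : ∑ᶠ w ∈ FlatCat (n + 1), peakCount (n + 1) w =
      ∑ w ∈ FlatCat.toFinset (n + 1), #(descents (n + 1) w) := by
    rw [finsum_mem_eq_finite_toFinset_sum _ (FlatCat.finite _)]
    exact sum_congr rfl fun w hw =>
      FlatCat.peakCount_eq_card_descents (FlatCat.mem_toFinset.mp hw)
  have hdescents := FlatCat.statSum_linear n 0 0 1 0
  simp only [FlatCat.statSum, zero_add, zero_mul, one_mul, add_zero, zero_div] at hdescents
  rw [hpeaks, Nat.cast_sum, hdescents]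
  rcases n with _ | n
  · norm_num
  · push_cast
    rw [pow_succ]
    ring

/-- For every `n ≥ 3`, the total number of peaks over all flattened Catalan
words of length `n` equals `(3^(n-2) - 1)(n - 1)/4`. -/
theorem flatCat_total_peaks (n : ℕ) (hn : 3 ≤ n) :
    ((∑ᶠ w ∈ FlatCat n, peakCount n w : ℕ) : ℚ) =
      (3 ^ (n - 2) - 1) * ((n : ℚ) - 1) / 4 :=
  flatCat_total_peaks_general n
end

section
/- For every integer n ≥ 3, the total number of symmetric peaks, summed over all flattened Catalan words of length n, equals (63 + 3^n + 2(3^n − 45)n + 18n²)/144. -/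
namespace FlatCatAux

open Function Set

instance (n : ℕ) (w : ℕ → ℕ) : DecidablePred (IsRunStart n w) := fun j => by
  unfold IsRunStart; infer_instance

/-- Index of the last run start of the length-`n` word `w`. -/
noncomputable def lrs (n : ℕ) (w : ℕ → ℕ) : ℕ := Nat.findGreatest (IsRunStart n w) (n - 1)

/-- Value at the last run start. -/
noncomputable def sVal (n : ℕ) (w : ℕ → ℕ) : ℕ := w (lrs n w)

/-- The "state": last value minus last run start value. -/
noncomputable def dVal (n : ℕ) (w : ℕ → ℕ) : ℕ := w (n - 1) - sVal n w

variable {n : ℕ} {w : ℕ → ℕ} {x : ℕ}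

theorem runStart_zero (hn : 0 < n) : IsRunStart n w 0 := ⟨hn, Or.inl rfl⟩

theorem lrs_le : lrs n w ≤ n - 1 := Nat.findGreatest_le _

theorem lrs_isRunStart (hn : 0 < n) : IsRunStart n w (lrs n w) :=
  Nat.findGreatest_spec (Nat.zero_le _) (runStart_zero hn)

theorem not_runStart_of_lrs_lt {k : ℕ} (h1 : lrs n w < k) (h2 : k ≤ n - 1) :
    ¬ IsRunStart n w k := Nat.findGreatest_is_greatest h1 h2

theorem runStart_le_lrs {k : ℕ} (h : IsRunStart n w k) : k ≤ lrs n w :=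
  Nat.le_findGreatest (by have := h.1; omega) h

theorem mono_after_lrs (hw : IsCatalanWord n w) :
    ∀ j, lrs n w ≤ j → j ≤ n - 1 → sVal n w ≤ w j := by
  intro j
  induction j with
  | zero => intro h1 _; have : lrs n w = 0 := Nat.le_zero.mp h1
            simp [sVal, this]
  | succ j ih =>
    intro h1 h2
    rcases Nat.lt_or_ge (lrs n w) (j + 1) with h | h
    · have hns : ¬ IsRunStart n w (j + 1) := not_runStart_of_lrs_lt h h2
      have hj1 : j + 1 < n := by omega
      have : ¬ (w (j + 1) < w j) := by
        intro hlt
        exact hns ⟨hj1, Or.inr (by simpa using hlt)⟩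
      have hj : sVal n w ≤ w j := ih (by omega) (by omega)
      omega
    · have : lrs n w = j + 1 := by omega
      simp [sVal, this]

theorem sVal_le_last (hw : IsCatalanWord n w) (hn : 0 < n) : sVal n w ≤ w (n - 1) :=
  mono_after_lrs hw (n - 1) lrs_le le_rfl

theorem runStart_val_le_sVal (hf : IsFlattened n w) {k : ℕ} (h : IsRunStart n w k) :
    w k ≤ sVal n w :=
  hf k (lrs n w) h (lrs_isRunStart (h.1.trans_le' (Nat.zero_le _))) (runStart_le_lrs h)


theorem update_lt {i : ℕ} (h : i < n) : Function.update w n x i = w i :=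
  Function.update_of_ne (by omega) _ _

theorem update_self' : Function.update w n x n = x := Function.update_self _ _ _

theorem runStart_update_iff {j : ℕ} (hj : j < n) :
    IsRunStart (n + 1) (Function.update w n x) j ↔ IsRunStart n w j := by
  unfold IsRunStart
  rw [update_lt hj, update_lt (show j - 1 < n by omega)]
  constructor
  · rintro ⟨-, h⟩; exact ⟨hj, h⟩
  · rintro ⟨-, h⟩; exact ⟨by omega, h⟩

theorem runStart_update_top (hn : 0 < n) :
    IsRunStart (n + 1) (Function.update w n x) n ↔ x < w (n - 1) := by
  unfold IsRunStart
  rw [update_self', update_lt (show n - 1 < n by omega)]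
  constructor
  · rintro ⟨-, h | h⟩
    · omega
    · exact h
  · intro h; exact ⟨by omega, Or.inr h⟩

theorem update_mem_iff (hn : 0 < n) (hw : w ∈ FlatCat n) (x : ℕ) :
    Function.update w n x ∈ FlatCat (n + 1) ↔ sVal n w ≤ x ∧ x ≤ w (n - 1) + 1 := by
  obtain ⟨⟨hc0, hc1, hc2⟩, hfl⟩ := hw
  constructor
  · rintro ⟨⟨-, hc1', -⟩, hfl'⟩
    have hx : x ≤ w (n - 1) + 1 := by
      have := hc1' (n - 1) (by omega)
      rw [show n - 1 + 1 = n by omega, update_self', update_lt (show n - 1 < n by omega)] at this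
      exact this
    refine ⟨?_, hx⟩
    rcases Nat.lt_or_ge x (w (n - 1)) with hlt | hge
    · -- n is a run start of the updated word
      have htop : IsRunStart (n + 1) (Function.update w n x) n :=
        (runStart_update_top hn).mpr hlt
      have hlrs : IsRunStart (n + 1) (Function.update w n x) (lrs n w) :=
        (runStart_update_iff (by have := lrs_le (n := n) (w := w); omega)).mpr
          (lrs_isRunStart hn)
      have := hfl' (lrs n w) n hlrs htop (by have := lrs_le (n := n) (w := w); omega)
      rwa [update_lt (by have := lrs_le (n := n) (w := w); omega), update_self'] at this
    · exact le_trans (sVal_le_last ⟨hc0, hc1, hc2⟩ hn) hge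
  · rintro ⟨hsx, hx⟩
    refine ⟨⟨?_, ?_, ?_⟩, ?_⟩
    · rw [update_lt hn]; exact hc0
    · intro i hi
      rcases Nat.lt_or_ge (i + 1) n with h | h
      · rw [update_lt h, update_lt (by omega)]; exact hc1 i h
      · have hi1 : i + 1 = n := by omega
        rw [hi1, update_self', update_lt (show i < n by omega)]
        rw [show i = n - 1 by omega]
        exact hx
    · intro i hi
      rw [Function.update_of_ne (by omega)]
      exact hc2 i (by omega)
    · intro i j hi hj hij
      rcases Nat.lt_or_ge j n with hjn | hjn
      · have hin : i < n := lt_of_le_of_lt hij hjn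
        rw [update_lt hin, update_lt hjn]
        exact hfl i j ((runStart_update_iff hin).mp hi) ((runStart_update_iff hjn).mp hj) hij
      · rw [show j = n from by have := hj.1; omega, update_self']
        rcases Nat.lt_or_ge i n with hin | hin
        · rw [update_lt hin]
          exact le_trans (runStart_val_le_sVal hfl ((runStart_update_iff hin).mp hi)) hsx
        · rw [show i = n from by have := hi.1; omega, update_self']

theorem truncate_mem (hn : 0 < n) (hw : w ∈ FlatCat (n + 1)) :
    Function.update w n 0 ∈ FlatCat n := by
  obtain ⟨⟨hc0, hc1, hc2⟩, hfl⟩ := hw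
  refine ⟨⟨?_, ?_, ?_⟩, ?_⟩
  · rw [update_lt hn]; exact hc0
  · intro i hi
    rw [update_lt (by omega), update_lt (by omega)]
    exact hc1 i (by omega)
  · intro i hi
    rcases eq_or_ne i n with rfl | h
    · rw [update_self']
    · rw [Function.update_of_ne h]; exact hc2 i (by omega)
  · intro i j hi hj hij
    have hin : i < n := hi.1
    have hjn : j < n := hj.1
    rw [update_lt hin, update_lt hjn]
    refine hfl i j ?_ ?_ hij
    · obtain ⟨-, h2⟩ := hi
      rw [update_lt hin, update_lt (show i - 1 < n by omega)] at h2
      exact ⟨by omega, h2⟩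
    · obtain ⟨-, h2⟩ := hj
      rw [update_lt hjn, update_lt (show j - 1 < n by omega)] at h2
      exact ⟨by omega, h2⟩

theorem eq_update_truncate (hw : w ∈ FlatCat (n + 1)) :
    w = Function.update (Function.update w n 0) n (w n) := by
  funext i
  rcases eq_or_ne i n with rfl | h
  · rw [update_self']
  · rw [Function.update_of_ne h, Function.update_of_ne h]

theorem flatCat_succ (hn : 0 < n) :
    FlatCat (n + 1) =
      ⋃ w ∈ FlatCat n,
        (fun x => Function.update w n x) '' ↑(Finset.Icc (sVal n w) (w (n - 1) + 1)) := by
  ext w'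
  simp only [Set.mem_iUnion, Set.mem_image, Finset.coe_Icc, Set.mem_Icc]
  constructor
  · intro hw'
    refine ⟨Function.update w' n 0, truncate_mem hn hw', w' n, ?_, ?_⟩
    · rw [← (update_mem_iff hn (truncate_mem hn hw') (w' n))]
      rw [← eq_update_truncate hw']
      exact hw'
    · exact (eq_update_truncate hw').symm
  · rintro ⟨w, hw, x, hx, rfl⟩
    exact (update_mem_iff hn hw x).mpr hx


theorem catalan_le (hw : IsCatalanWord n w) : ∀ i, w i ≤ i := by
  intro i
  induction i with
  | zero => exact le_of_eq hw.1
  | succ i ih =>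
    rcases Nat.lt_or_ge (i + 1) n with h | h
    · have := hw.2.1 i h; omega
    · rw [hw.2.2 (i + 1) h]; exact Nat.zero_le _

theorem flatCat_finite (n : ℕ) : (FlatCat n).Finite := by
  have : Set.InjOn
      (fun w : ℕ → ℕ => fun i : Fin n => (⟨w i % n, Nat.mod_lt _ (Nat.lt_of_le_of_lt (Nat.zero_le _) i.2)⟩ : Fin n))
      (FlatCat n) := by
    intro w hw w' hw' h
    funext i
    rcases Nat.lt_or_ge i n with hi | hi
    · have := congrArg Fin.val (congrFun h ⟨i, hi⟩)
      simp only at this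
      rwa [Nat.mod_eq_of_lt (lt_of_le_of_lt (catalan_le hw.1 i) hi),
        Nat.mod_eq_of_lt (lt_of_le_of_lt (catalan_le hw'.1 i) hi)] at this
    · rw [hw.1.2.2 i hi, hw'.1.2.2 i hi]
  exact Set.Finite.of_finite_image (Set.toFinite _) this

/-- The flattened Catalan words of length `n`, as a finset. -/
noncomputable def FC (n : ℕ) : Finset (ℕ → ℕ) := (flatCat_finite n).toFinset

theorem mem_FC {n : ℕ} {w : ℕ → ℕ} : w ∈ FC n ↔ w ∈ FlatCat n := Set.Finite.mem_toFinset _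

theorem finsum_FC {M : Type*} [AddCommMonoid M] (n : ℕ) (g : (ℕ → ℕ) → M) :
    ∑ᶠ w ∈ FlatCat n, g w = ∑ w ∈ FC n, g w := by
  rw [← finsum_mem_coe_finset, FC, Set.Finite.coe_toFinset]

theorem update_injOn_FC (hn : 0 < n) {w w' : ℕ → ℕ} (hw : w ∈ FlatCat n)
    (hw' : w' ∈ FlatCat n) {x y : ℕ} (h : Function.update w n x = Function.update w' n y) :
    w = w' := by
  funext i
  rcases eq_or_ne i n with rfl | hne
  · rw [hw.1.2.2 i le_rfl, hw'.1.2.2 i le_rfl]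
  · have := congrFun h i
    rwa [Function.update_of_ne hne, Function.update_of_ne hne] at this

theorem sum_flatCat_succ (hn : 0 < n) (g : (ℕ → ℕ) → ℚ) :
    ∑ w' ∈ FC (n + 1), g w' =
      ∑ w ∈ FC n, ∑ x ∈ Finset.Icc (sVal n w) (w (n - 1) + 1), g (Function.update w n x) := by
  rw [← finsum_FC, ← finsum_FC]
  rw [show FlatCat (n + 1) = ⋃ w ∈ FlatCat n,
      (fun x => Function.update w n x) '' ↑(Finset.Icc (sVal n w) (w (n - 1) + 1)) from
    flatCat_succ hn]
  rw [finsum_mem_biUnion]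
  · refine finsum_mem_congr rfl fun w hw => ?_
    rw [finsum_mem_image (fun x _ y _ h => by
      have := congrFun h n; rwa [update_self', update_self'] at this)]
    exact finsum_mem_coe_finset _ _
  · intro w hw w' hw' hne
    simp only [Function.onFun, Set.disjoint_left]
    rintro z ⟨x, -, rfl⟩ ⟨y, -, hz⟩
    exact hne (update_injOn_FC hn hw hw' hz.symm)
  · exact flatCat_finite n
  · intro w _
    exact Set.Finite.image _ (Set.toFinite _)


theorem lrs_update (hn : 0 < n) (hw : w ∈ FlatCat n) :
    lrs (n + 1) (Function.update w n x) = if x < w (n - 1) then n else lrs n w := by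
  split_ifs with hlt
  · rw [lrs, show n + 1 - 1 = n from rfl]
    rw [Nat.findGreatest_eq_iff]
    exact ⟨le_rfl, fun _ => (runStart_update_top hn).mpr hlt, fun k h1 h2 => by omega⟩
  · rw [lrs, show n + 1 - 1 = n from rfl]
    rw [Nat.findGreatest_eq_iff]
    have hlrs := lrs_le (n := n) (w := w)
    refine ⟨by omega, ?_, ?_⟩
    · intro _
      exact (runStart_update_iff (by omega)).mpr (lrs_isRunStart hn)
    · intro k h1 h2
      rcases Nat.lt_or_ge k n with hk | hk
      · intro hrs
        exact not_runStart_of_lrs_lt h1 (by omega) ((runStart_update_iff hk).mp hrs)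
      · have : k = n := by omega
        subst this
        rw [runStart_update_top hn]
        omega

theorem sVal_update (hn : 0 < n) (hw : w ∈ FlatCat n) :
    sVal (n + 1) (Function.update w n x) = if x < w (n - 1) then x else sVal n w := by
  rw [sVal, lrs_update hn hw]
  by_cases hlt : x < w (n - 1)
  · rw [if_pos hlt, if_pos hlt]; exact update_self'
  · rw [if_neg hlt, if_neg hlt, update_lt (by have := lrs_le (n := n) (w := w); omega)]
    rfl

theorem dVal_update (hn : 0 < n) (hw : w ∈ FlatCat n) :
    dVal (n + 1) (Function.update w n x) = if x < w (n - 1) then 0 else x - sVal n w := by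
  rw [dVal, show n + 1 - 1 = n from rfl, update_self', sVal_update hn hw]
  by_cases hlt : x < w (n - 1)
  · rw [if_pos hlt, if_pos hlt]; omega
  · rw [if_neg hlt, if_neg hlt]


/-- The set of symmetric peaks. -/
def SP (n : ℕ) (w : ℕ → ℕ) : Set (ℕ × ℕ) := {p | 1 ≤ p.2 ∧ IsSymPeak n w p.2 p.1}

theorem symPeakCount_eq (n : ℕ) (w : ℕ → ℕ) : symPeakCount n w = (SP n w).ncard := rfl

theorem SP_finite (n : ℕ) (w : ℕ → ℕ) : (SP n w).Finite := by
  refine Set.Finite.subset ((Set.finite_Iio n).prod (Set.finite_Iio n)) ?_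
  rintro ⟨i, ℓ⟩ ⟨h1, h2, -⟩
  exact ⟨by simp only [Set.mem_Iio]; omega, by simp only [Set.mem_Iio]; omega⟩

theorem newPeak_char (hn : 0 < n) (hw : w ∈ FlatCat n) {i ℓ : ℕ} (hℓ : 1 ≤ ℓ)
    (hp : IsSymPeak (n + 1) (Function.update w n x) ℓ i) (he : i + ℓ + 1 = n) :
    x + 1 = w (n - 1) ∧ sVal n w < w (n - 1) ∧
      i = Nat.findGreatest (fun k => w k ≠ w (n - 1)) (n - 1) ∧ ℓ = n - 1 - i := by
  obtain ⟨⟨hc0, hc1, hc2⟩, hfl⟩ := hw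
  obtain ⟨hlt, hplat, hend⟩ := hp
  have hin : i < n := by omega
  have hplat' : ∀ t, 1 ≤ t → t ≤ ℓ → w (i + t) = w i + 1 := by
    intro t h1t h2t
    have := hplat t h1t h2t
    rwa [update_lt (by omega), update_lt hin] at this
  have hv : w (n - 1) = w i + 1 := by
    have := hplat' ℓ hℓ le_rfl
    rwa [show i + ℓ = n - 1 by omega] at this
  have hxi : x = w i := by
    have := hend
    rwa [show i + ℓ + 1 = n from he, update_self', update_lt hin] at this
  have hx1 : x + 1 = w (n - 1) := by omega
  have hsv : sVal n w < w (n - 1) := by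
    by_contra hge
    have hs_le : sVal n w ≤ w (n - 1) := sVal_le_last ⟨hc0, hc1, hc2⟩ hn
    rcases Nat.lt_or_ge i (lrs n w) with hil | hli
    · have hlrs_le : lrs n w ≤ n - 1 := lrs_le
      have hlv : w (lrs n w) = w i + 1 := by
        have := hplat' (lrs n w - i) (by omega) (by omega)
        rwa [show i + (lrs n w - i) = lrs n w by omega] at this
      obtain ⟨-, h0 | hdesc⟩ := lrs_isRunStart (w := w) hn
      · omega
      · rcases Nat.lt_or_ge i (lrs n w - 1) with h' | h'
        · have : w (lrs n w - 1) = w i + 1 := by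
            have := hplat' (lrs n w - 1 - i) (by omega) (by omega)
            rwa [show i + (lrs n w - 1 - i) = lrs n w - 1 by omega] at this
          omega
        · have hE : lrs n w - 1 = i := by omega
          rw [hE] at hdesc
          omega
    · have hmono := mono_after_lrs ⟨hc0, hc1, hc2⟩ i hli (by omega)
      have : sVal n w = w (lrs n w) := rfl
      omega
  have hq_le : i ≤ Nat.findGreatest (fun k => w k ≠ w (n - 1)) (n - 1) :=
    Nat.le_findGreatest (P := fun k => w k ≠ w (n - 1)) (by omega) (by show w i ≠ w (n - 1); omega)
  have hq_eq : Nat.findGreatest (fun k => w k ≠ w (n - 1)) (n - 1) = i := by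
    by_contra hne
    set q := Nat.findGreatest (fun k => w k ≠ w (n - 1)) (n - 1) with hqdef
    have hgt : i < q := lt_of_le_of_ne hq_le (Ne.symm hne)
    have hqP : w q ≠ w (n - 1) := Nat.findGreatest_spec (P := fun k => w k ≠ w (n - 1)) (m := i) (by omega) (by show w i ≠ w (n - 1); omega)
    have hq_le' : q ≤ n - 1 := Nat.findGreatest_le _
    have : w q = w i + 1 := by
      have := hplat' (q - i) (by omega) (by omega)
      rwa [show i + (q - i) = q by omega] at this
    omega
  exact ⟨hx1, hsv, hq_eq.symm, by omega⟩

theorem newPeak_build (hn : 0 < n) (hw : w ∈ FlatCat n) (h1 : x + 1 = w (n - 1))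
    (h2 : sVal n w < w (n - 1)) :
    1 ≤ n - 1 - Nat.findGreatest (fun k => w k ≠ w (n - 1)) (n - 1) ∧
      IsSymPeak (n + 1) (Function.update w n x)
        (n - 1 - Nat.findGreatest (fun k => w k ≠ w (n - 1)) (n - 1))
        (Nat.findGreatest (fun k => w k ≠ w (n - 1)) (n - 1)) := by
  obtain ⟨⟨hc0, hc1, hc2⟩, hfl⟩ := hw
  set q := Nat.findGreatest (fun k => w k ≠ w (n - 1)) (n - 1) with hqdef
  have hq_le : q ≤ n - 1 := Nat.findGreatest_le _
  have hP0 : w 0 ≠ w (n - 1) := by rw [hc0]; omega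
  have hPq : w q ≠ w (n - 1) := Nat.findGreatest_spec (P := fun k => w k ≠ w (n - 1)) (Nat.zero_le _) hP0
  have hplat : ∀ k, q < k → k ≤ n - 1 → w k = w (n - 1) := by
    intro k hk1 hk2
    by_contra hne
    exact Nat.findGreatest_is_greatest hk1 hk2 hne
  have hqn : q < n - 1 := lt_of_le_of_ne hq_le (fun h => hPq (by rw [h]))
  have hq1 : w (q + 1) = w (n - 1) := hplat (q + 1) (by omega) (by omega)
  have hlrs_q : lrs n w ≤ q := by
    refine Nat.le_findGreatest (P := fun k => w k ≠ w (n - 1)) lrs_le ?_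
    show w (lrs n w) ≠ w (n - 1)
    have : sVal n w = w (lrs n w) := rfl
    omega
  have hnrs : ¬ IsRunStart n w (q + 1) := not_runStart_of_lrs_lt (by omega) (by omega)
  have hle : ¬ (w (q + 1) < w q) := fun hlt => hnrs ⟨by omega, Or.inr (by simpa using hlt)⟩
  have hcat : w (q + 1) ≤ w q + 1 := hc1 q (by omega)
  have hwq : w q + 1 = w (n - 1) := by omega
  refine ⟨by omega, by omega, ?_, ?_⟩
  · intro t h1t h2t
    rw [update_lt (by omega), update_lt (by omega)]
    have := hplat (q + t) (by omega) (by omega)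
    omega
  · rw [show q + (n - 1 - q) + 1 = n by omega, update_self', update_lt (by omega)]
    omega

theorem symPeakCount_update (hn : 0 < n) (hw : w ∈ FlatCat n) :
    symPeakCount (n + 1) (Function.update w n x) =
      symPeakCount n w +
        (if x + 1 = w (n - 1) ∧ sVal n w < w (n - 1) then 1 else 0) := by
  classical
  set q := Nat.findGreatest (fun k => w k ≠ w (n - 1)) (n - 1) with hqdef
  have hq_le : q ≤ n - 1 := Nat.findGreatest_le _
  have hset : SP (n + 1) (Function.update w n x) =
      SP n w ∪ (if x + 1 = w (n - 1) ∧ sVal n w < w (n - 1)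
        then {((q, n - 1 - q) : ℕ × ℕ)} else ∅) := by
    ext ⟨i, ℓ⟩
    simp only [SP, Set.mem_setOf_eq, Set.mem_union]
    constructor
    · rintro ⟨hl, hp⟩
      rcases Nat.lt_or_ge (i + ℓ + 1) n with hlt | hge
      · left
        refine ⟨hl, hlt, ?_, ?_⟩
        · intro t h1 h2
          have := hp.2.1 t h1 h2
          rwa [update_lt (by omega), update_lt (by omega)] at this
        · have := hp.2.2
          rwa [update_lt (by omega), update_lt (by omega)] at this
      · have he : i + ℓ + 1 = n := by have := hp.1; omega
        obtain ⟨hx1, hsv, hiq, hlq⟩ := newPeak_char hn hw hl hp he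
        right
        rw [if_pos ⟨hx1, hsv⟩]
        simp only [Set.mem_singleton_iff, Prod.mk.injEq]
        exact ⟨by rw [hiq], by omega⟩
    · rintro (⟨hl, hlt, hplat, hend⟩ | hmem)
      · refine ⟨hl, by omega, ?_, ?_⟩
        · intro t h1 h2
          rw [update_lt (by omega), update_lt (by omega)]
          exact hplat t h1 h2
        · rw [update_lt (by omega), update_lt (by omega)]
          exact hend
      · by_cases hcond : x + 1 = w (n - 1) ∧ sVal n w < w (n - 1)
        · rw [if_pos hcond] at hmem
          simp only [Set.mem_singleton_iff, Prod.mk.injEq] at hmem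
          obtain ⟨rfl, rfl⟩ := hmem
          exact newPeak_build hn hw hcond.1 hcond.2
        · rw [if_neg hcond] at hmem
          exact absurd hmem (Set.notMem_empty _)
  rw [symPeakCount_eq, symPeakCount_eq, hset]
  by_cases hcond : x + 1 = w (n - 1) ∧ sVal n w < w (n - 1)
  · rw [if_pos hcond, if_pos hcond,
      Set.ncard_union_eq ?_ (SP_finite n w) (Set.finite_singleton _), Set.ncard_singleton]
    rw [Set.disjoint_singleton_right]
    rintro ⟨-, hmem, -⟩
    omega
  · rw [if_neg hcond, if_neg hcond, Set.union_empty, add_zero]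


section IccSums

variable {s v : ℕ}

theorem H1 (hs : s ≤ v) : ∑ x ∈ Finset.Icc s (v + 1), (1 : ℚ) = ((v : ℚ) - s) + 2 := by
  rw [Finset.sum_const, Nat.card_Icc, nsmul_eq_mul, mul_one, Nat.cast_sub (by omega)]
  push_cast
  ring

theorem H2 (hs : s ≤ v) :
    ∑ x ∈ Finset.Icc s (v + 1), (if x < v then (0 : ℚ) else ((x - s : ℕ) : ℚ)) =
      2 * ((v : ℚ) - s) + 1 := by
  rw [← Finset.insert_Icc_right_eq_Icc_add_one (show s ≤ v + 1 by omega),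
    Finset.sum_insert (by simp [Finset.mem_Icc])]
  rw [if_neg (by omega)]
  rw [Finset.sum_eq_single_of_mem v (Finset.mem_Icc.mpr ⟨hs, le_rfl⟩)
    (fun x hx hne => if_pos (by rw [Finset.mem_Icc] at hx; omega))]
  rw [if_neg (by omega), Nat.cast_sub (by omega), Nat.cast_sub (by omega)]
  push_cast
  ring

theorem H3 (hs : s ≤ v) :
    ∑ x ∈ Finset.Icc s (v + 1),
        (if (if x < v then 0 else x - s) = 0 then (1 : ℚ) else 0) =
      ((v : ℚ) - s) + (if v = s then (1 : ℚ) else 0) := by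
  rw [← Finset.insert_Icc_right_eq_Icc_add_one (show s ≤ v + 1 by omega),
    Finset.sum_insert (by simp [Finset.mem_Icc])]
  rw [if_neg (by rw [if_neg (by omega)]; omega)]
  have hcongr : ∀ x ∈ Finset.Icc s v,
      (if (if x < v then 0 else x - s) = 0 then (1 : ℚ) else 0) =
        1 + (if x = v then (if v = s then (1 : ℚ) else 0) - 1 else 0) := by
    intro x hx
    rw [Finset.mem_Icc] at hx
    rcases Nat.lt_or_ge x v with h | h
    · rw [if_pos h, if_pos rfl, if_neg (by omega)]
      ring
    · have hxv : x = v := by omega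
      rw [hxv, if_neg (lt_irrefl v), if_pos rfl]
      by_cases hvs : v = s
      · rw [if_pos (show v - s = 0 by omega), if_pos hvs]; ring
      · rw [if_neg (show v - s ≠ 0 by omega), if_neg hvs]; ring
  rw [Finset.sum_congr rfl hcongr, Finset.sum_add_distrib, Finset.sum_const, Nat.card_Icc,
    Finset.sum_ite_eq' (Finset.Icc s v) v, if_pos (Finset.mem_Icc.mpr ⟨hs, le_rfl⟩),
    nsmul_eq_mul, mul_one, Nat.cast_sub (by omega)]
  push_cast
  ring

theorem H4 (hs : s ≤ v) :
    ∑ x ∈ Finset.Icc s (v + 1), (if x + 1 = v ∧ s < v then (1 : ℚ) else 0) =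
      if s < v then (1 : ℚ) else 0 := by
  by_cases hsv : s < v
  · rw [if_pos hsv]
    have hcongr : ∀ x ∈ Finset.Icc s (v + 1),
        (if x + 1 = v ∧ s < v then (1 : ℚ) else 0) = (if x = v - 1 then (1 : ℚ) else 0) := by
      intro x hx
      by_cases h : x = v - 1
      · rw [if_pos ⟨by omega, hsv⟩, if_pos h]
      · rw [if_neg (fun hc => h (by omega)), if_neg h]
    rw [Finset.sum_congr rfl hcongr,
      Finset.sum_ite_eq' (Finset.Icc s (v + 1)) (v - 1),
      if_pos (Finset.mem_Icc.mpr ⟨by omega, by omega⟩)]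
  · rw [if_neg hsv]
    exact Finset.sum_eq_zero fun x _ => if_neg (fun hc => hsv hc.2)

end IccSums

noncomputable def Nst (n : ℕ) : ℚ := ∑ _w ∈ FC n, (1 : ℚ)
noncomputable def Dst (n : ℕ) : ℚ := ∑ w ∈ FC n, (dVal n w : ℚ)
noncomputable def A0st (n : ℕ) : ℚ := ∑ w ∈ FC n, (if dVal n w = 0 then (1 : ℚ) else 0)
noncomputable def Pst (n : ℕ) : ℚ := ∑ w ∈ FC n, (symPeakCount n w : ℚ)
noncomputable def Qst (n : ℕ) : ℚ :=
  ∑ w ∈ FC n, (dVal n w : ℚ) * (symPeakCount n w : ℚ)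

variable (hn : 0 < n) (hw : w ∈ FlatCat n)

theorem dVal_cast (hn : 0 < n) (hw : w ∈ FlatCat n) :
    (dVal n w : ℚ) = (w (n - 1) : ℚ) - (sVal n w : ℚ) := by
  rw [dVal, Nat.cast_sub (sVal_le_last hw.1 hn)]

theorem I1 (hn : 0 < n) (hw : w ∈ FlatCat n) :
    ∑ x ∈ Finset.Icc (sVal n w) (w (n - 1) + 1), (1 : ℚ) = (dVal n w : ℚ) + 2 := by
  rw [H1 (sVal_le_last hw.1 hn), dVal_cast hn hw]

theorem I2 (hn : 0 < n) (hw : w ∈ FlatCat n) :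
    ∑ x ∈ Finset.Icc (sVal n w) (w (n - 1) + 1),
        ((dVal (n + 1) (Function.update w n x) : ℚ)) = 2 * (dVal n w : ℚ) + 1 := by
  have hcongr : ∀ x ∈ Finset.Icc (sVal n w) (w (n - 1) + 1),
      ((dVal (n + 1) (Function.update w n x) : ℚ)) =
        (if x < w (n - 1) then (0 : ℚ) else ((x - sVal n w : ℕ) : ℚ)) := by
    intro x _
    rw [dVal_update hn hw]
    by_cases h : x < w (n - 1)
    · rw [if_pos h, if_pos h, Nat.cast_zero]
    · rw [if_neg h, if_neg h]
  rw [Finset.sum_congr rfl hcongr, H2 (sVal_le_last hw.1 hn), dVal_cast hn hw]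

theorem I3 (hn : 0 < n) (hw : w ∈ FlatCat n) :
    ∑ x ∈ Finset.Icc (sVal n w) (w (n - 1) + 1),
        (if dVal (n + 1) (Function.update w n x) = 0 then (1 : ℚ) else 0) =
      (dVal n w : ℚ) + (if dVal n w = 0 then (1 : ℚ) else 0) := by
  have hs := sVal_le_last hw.1 hn
  have hcongr : ∀ x ∈ Finset.Icc (sVal n w) (w (n - 1) + 1),
      (if dVal (n + 1) (Function.update w n x) = 0 then (1 : ℚ) else 0) =
        (if (if x < w (n - 1) then 0 else x - sVal n w) = 0 then (1 : ℚ) else 0) := by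
    intro x _
    rw [dVal_update hn hw]
  rw [Finset.sum_congr rfl hcongr, H3 hs, dVal_cast hn hw]
  congr 1
  refine if_congr ?_ rfl rfl
  rw [dVal]
  omega

theorem I4 (hn : 0 < n) (hw : w ∈ FlatCat n) :
    ∑ x ∈ Finset.Icc (sVal n w) (w (n - 1) + 1),
        ((symPeakCount (n + 1) (Function.update w n x) : ℚ)) =
      ((dVal n w : ℚ) + 2) * (symPeakCount n w : ℚ) +
        (1 - if dVal n w = 0 then (1 : ℚ) else 0) := by
  have hs := sVal_le_last hw.1 hn
  have hcongr : ∀ x ∈ Finset.Icc (sVal n w) (w (n - 1) + 1),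
      ((symPeakCount (n + 1) (Function.update w n x) : ℚ)) =
        (symPeakCount n w : ℚ) +
          (if x + 1 = w (n - 1) ∧ sVal n w < w (n - 1) then (1 : ℚ) else 0) := by
    intro x _
    rw [symPeakCount_update hn hw, Nat.cast_add]
    congr 1
    split_ifs <;> simp
  rw [Finset.sum_congr rfl hcongr, Finset.sum_add_distrib, Finset.sum_const, Nat.card_Icc,
    H4 hs, nsmul_eq_mul, dVal_cast hn hw, Nat.cast_sub (by omega)]
  have : (if sVal n w < w (n - 1) then (1 : ℚ) else 0) =
      1 - (if dVal n w = 0 then (1 : ℚ) else 0) := by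
    by_cases h : sVal n w < w (n - 1)
    · rw [if_pos h, if_neg (by rw [dVal]; omega)]; ring
    · rw [if_neg h, if_pos (by rw [dVal]; omega)]; ring
  rw [this]
  push_cast
  ring

theorem I5 (hn : 0 < n) (hw : w ∈ FlatCat n) :
    ∑ x ∈ Finset.Icc (sVal n w) (w (n - 1) + 1),
        ((dVal (n + 1) (Function.update w n x) : ℚ) *
          (symPeakCount (n + 1) (Function.update w n x) : ℚ)) =
      (2 * (dVal n w : ℚ) + 1) * (symPeakCount n w : ℚ) := by
  have hs := sVal_le_last hw.1 hn
  have hcongr : ∀ x ∈ Finset.Icc (sVal n w) (w (n - 1) + 1),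
      ((dVal (n + 1) (Function.update w n x) : ℚ) *
          (symPeakCount (n + 1) (Function.update w n x) : ℚ)) =
        (dVal (n + 1) (Function.update w n x) : ℚ) * (symPeakCount n w : ℚ) := by
    intro x _
    rw [symPeakCount_update hn hw]
    by_cases h : x + 1 = w (n - 1) ∧ sVal n w < w (n - 1)
    · rw [if_pos h, dVal_update hn hw, if_pos (by omega)]
      norm_num
    · rw [if_neg h]
      norm_num
  rw [Finset.sum_congr rfl hcongr, ← Finset.sum_mul, I2 hn hw]


theorem Nst_rec (hn : 0 < n) : Nst (n + 1) = Dst n + 2 * Nst n := by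
  rw [Nst, sum_flatCat_succ hn, Dst, Nst, Finset.mul_sum, ← Finset.sum_add_distrib]
  exact Finset.sum_congr rfl fun w hw => by rw [I1 hn (mem_FC.mp hw)]; ring

theorem Dst_rec (hn : 0 < n) : Dst (n + 1) = Nst n + 2 * Dst n := by
  rw [Dst, sum_flatCat_succ hn, Dst, Nst, Finset.mul_sum, ← Finset.sum_add_distrib]
  exact Finset.sum_congr rfl fun w hw => by rw [I2 hn (mem_FC.mp hw)]; ring

theorem A0st_rec (hn : 0 < n) : A0st (n + 1) = Dst n + A0st n := by
  rw [A0st, sum_flatCat_succ hn, Dst, A0st, ← Finset.sum_add_distrib]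
  exact Finset.sum_congr rfl fun w hw => by rw [I3 hn (mem_FC.mp hw)]

theorem Pst_rec (hn : 0 < n) : Pst (n + 1) = Qst n + 2 * Pst n + Nst n - A0st n := by
  rw [Pst, sum_flatCat_succ hn, Qst, Pst, Nst, A0st, Finset.mul_sum,
    ← Finset.sum_add_distrib, ← Finset.sum_add_distrib, ← Finset.sum_sub_distrib]
  exact Finset.sum_congr rfl fun w hw => by rw [I4 hn (mem_FC.mp hw)]; ring

theorem Qst_rec (hn : 0 < n) : Qst (n + 1) = Pst n + 2 * Qst n := by
  rw [Qst, sum_flatCat_succ hn, Pst, Qst, Finset.mul_sum, ← Finset.sum_add_distrib]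
  exact Finset.sum_congr rfl fun w hw => by rw [I5 hn (mem_FC.mp hw)]; ring

theorem flatCat_one : FlatCat 1 = {fun _ => 0} := by
  ext w
  simp only [Set.mem_singleton_iff]
  constructor
  · intro hw
    funext i
    rcases Nat.eq_zero_or_pos i with rfl | hi
    · exact hw.1.1
    · exact hw.1.2.2 i hi
  · rintro rfl
    exact ⟨⟨rfl, fun i hi => by omega, fun i _ => rfl⟩, fun i j _ _ _ => le_rfl⟩

theorem FC_one : FC 1 = {fun _ => 0} := by
  ext w
  rw [mem_FC, flatCat_one, Finset.mem_singleton, Set.mem_singleton_iff]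

theorem symPeakCount_one (w : ℕ → ℕ) : symPeakCount 1 w = 0 := by
  rw [symPeakCount_eq]
  have h : SP 1 w = ∅ := by
    ext ⟨i, ℓ⟩
    simp only [SP, Set.mem_setOf_eq, Set.mem_empty_iff_false, iff_false, not_and]
    rintro - ⟨h, -⟩
    omega
  rw [h, Set.ncard_empty]

theorem dVal_one (w : ℕ → ℕ) (hw : w ∈ FlatCat 1) : dVal 1 w = 0 := by
  rw [dVal]
  have h0 : w 0 = 0 := hw.1.1
  simp [h0]

theorem stats_closed : ∀ n : ℕ, 1 ≤ n →
    Nst n = (3 ^ n : ℚ) / 6 + 1 / 2 ∧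
    Dst n = (3 ^ n : ℚ) / 6 - 1 / 2 ∧
    A0st n = (3 ^ n : ℚ) / 12 + 5 / 4 - n / 2 ∧
    Pst n = (3 ^ n : ℚ) / 144 + n * 3 ^ n / 72 + 7 / 16 - 5 * n / 8 + n ^ 2 / 8 ∧
    Qst n = -(5 * (3 ^ n : ℚ)) / 144 + n * 3 ^ n / 72 - 3 / 16 + 3 * n / 8 - n ^ 2 / 8 := by
  intro n hn
  induction n, hn using Nat.le_induction with
  | base =>
    have hz : (fun _ : ℕ => (0 : ℕ)) ∈ FlatCat 1 := by rw [flatCat_one]; rfl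
    have hN : Nst 1 = 1 := by rw [Nst, FC_one, Finset.sum_singleton]
    have hD : Dst 1 = 0 := by
      rw [Dst, FC_one, Finset.sum_singleton, dVal_one _ hz, Nat.cast_zero]
    have hA : A0st 1 = 1 := by
      rw [A0st, FC_one, Finset.sum_singleton, dVal_one _ hz, if_pos rfl]
    have hP : Pst 1 = 0 := by
      rw [Pst, FC_one, Finset.sum_singleton, symPeakCount_one, Nat.cast_zero]
    have hQ : Qst 1 = 0 := by
      rw [Qst, FC_one, Finset.sum_singleton, symPeakCount_one, Nat.cast_zero, mul_zero]
    rw [hN, hD, hA, hP, hQ]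
    norm_num
  | succ n hn ih =>
    obtain ⟨h1, h2, h3, h4, h5⟩ := ih
    have hn' : 0 < n := hn
    refine ⟨?_, ?_, ?_, ?_, ?_⟩
    · rw [Nst_rec hn', h1, h2]; push_cast [pow_succ]; ring
    · rw [Dst_rec hn', h1, h2]; push_cast [pow_succ]; ring
    · rw [A0st_rec hn', h2, h3]; push_cast [pow_succ]; ring
    · rw [Pst_rec hn', h1, h3, h4, h5]; push_cast [pow_succ]; ring
    · rw [Qst_rec hn', h4, h5]; push_cast [pow_succ]; ring

end FlatCatAux


/-- For every `n ≥ 3`, the total number of symmetric peaks over all flattened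
Catalan words of length `n` equals `(63 + 3^n + 2(3^n - 45)n + 18n²)/144`. -/
theorem flatCat_total_symPeaks (n : ℕ) (hn : 3 ≤ n) :
    ((∑ᶠ w ∈ FlatCat n, symPeakCount n w : ℕ) : ℚ) =
      (63 + 3 ^ n + 2 * ((3 : ℚ) ^ n - 45) * (n : ℚ) + 18 * (n : ℚ) ^ 2) / 144 := by
  have h1 : 1 ≤ n := by omega
  obtain ⟨-, -, -, hP, -⟩ := FlatCatAux.stats_closed n h1
  have hcast : ((∑ᶠ w ∈ FlatCat n, symPeakCount n w : ℕ) : ℚ) = FlatCatAux.Pst n := by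
    rw [FlatCatAux.finsum_FC n (fun w => symPeakCount n w), Nat.cast_sum]
    rfl
  rw [hcast, hP]
  ring
end

section
/- For every integer n ≥ 1, the number of flattened Catalan words of length n containing no short peak (no 1-peak) equals F_{2(n−1)} + 1, where F_m denotes the m-th Fibonacci number with F_0 = 0 and F_1 = F_2 = 1. -/
namespace FCP

/-- head of reversed-encoded word; `[]` maps to `0`. -/
abbrev hd (x : List ℕ) : ℕ := x.headI

/-- value of the last run start (first strict increase scanning reversed list). -/
def rstart : List ℕ → ℕ
  | [] => 0
  | [a] => a
  | a :: b :: t => if a < b then a else rstart (b :: t)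

/-- last step was an ascent by one. -/
def flg : List ℕ → Prop
  | a :: b :: _ => a = b + 1
  | _ => False

instance : DecidablePred flg := by
  intro x
  match x with
  | a :: b :: t => exact inferInstanceAs (Decidable (a = b + 1))
  | [] => exact inferInstanceAs (Decidable False)
  | [a] => exact inferInstanceAs (Decidable False)

/-- good reversed words: flattened Catalan word with no short peak, reversed. -/
inductive Gd : List ℕ → Prop
  | base : Gd [0]
  | cons (m : ℕ) (x : List ℕ) (hx : Gd x) (h1 : m ≤ hd x + 1)
      (h2 : m < hd x → rstart x ≤ m) (h3 : flg x → hd x ≤ m) : Gd (m :: x)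

lemma Gd.ne_nil {x : List ℕ} (h : Gd x) : x ≠ [] := by
  cases h <;> simp

lemma Gd.inv {m : ℕ} {x : List ℕ} (h : Gd (m :: x)) (hx : x ≠ []) :
    Gd x ∧ m ≤ hd x + 1 ∧ (m < hd x → rstart x ≤ m) ∧ (flg x → hd x ≤ m) := by
  cases h with
  | base => simp at hx
  | cons m x hx h1 h2 h3 => exact ⟨hx, h1, h2, h3⟩

lemma rstart_cons (a : ℕ) {x : List ℕ} (hx : x ≠ []) :
    rstart (a :: x) = if a < hd x then a else rstart x := by
  obtain ⟨b, t, rfl⟩ := List.exists_cons_of_ne_nil hx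
  rfl

lemma Gd.rstart_le_hd {x : List ℕ} (h : Gd x) : rstart x ≤ hd x := by
  induction h with
  | base => simp [rstart]
  | cons m x hx h1 h2 h3 ih =>
    rw [rstart_cons m hx.ne_nil]
    by_cases hlt : m < hd x
    · simp [hlt, hd]
    · simp only [if_neg hlt, hd, List.headI_cons]
      exact le_trans ih (by omega)

lemma Gd.bounded {x : List ℕ} (h : Gd x) : ∀ a ∈ x, a < x.length := by
  induction h with
  | base => simp
  | cons m x hx h1 h2 h3 ih =>
    intro a ha
    rcases List.mem_cons.mp ha with rfl | ha
    · have hxl : 1 ≤ x.length := by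
        cases x
        · exact absurd rfl hx.ne_nil
        · simp
      have : hd x < x.length := by
        have := hx.ne_nil
        cases x with
        | nil => simp at this
        | cons b t => exact ih b (by simp [hd])
      simp only [List.length_cons]; omega
    · have := ih a ha; simp only [List.length_cons]; omega

/-- lists of fixed length with bounded entries form a finite set. -/
lemma finite_bounded (n B : ℕ) :
    {l : List ℕ | l.length = n ∧ ∀ a ∈ l, a < B}.Finite := by
  induction n with
  | zero =>
    apply Set.Finite.subset (Set.finite_singleton ([] : List ℕ))
    intro l hl
    simp only [Set.mem_setOf_eq, List.length_eq_zero_iff] at hl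
    simp [hl.1]
  | succ n ih =>
    apply Set.Finite.subset (Set.Finite.image (fun p : ℕ × List ℕ => p.1 :: p.2)
      ((Set.finite_Iio B).prod ih))
    rintro l ⟨hlen, hb⟩
    cases l with
    | nil => simp at hlen
    | cons a t =>
      refine ⟨(a, t), ⟨?_, ?_, ?_⟩, rfl⟩
      · exact hb a (by simp)
      · simpa using hlen
      · intro b hbmem; exact hb b (by simp [hbmem])

/-- good words of length `n`. -/
def S (n : ℕ) : Set (List ℕ) := {x | Gd x ∧ x.length = n}

/-- drop pairs from a non-flag word. -/
def Dp (n : ℕ) : Set (List ℕ × ℕ) :=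
  {p | p.1 ∈ S n ∧ ¬ flg p.1 ∧ rstart p.1 ≤ p.2 ∧ p.2 < hd p.1}

/-- drop-range pairs from a flag word. -/
def Vq (n : ℕ) : Set (List ℕ × ℕ) :=
  {p | p.1 ∈ S n ∧ flg p.1 ∧ rstart p.1 ≤ p.2 ∧ p.2 < hd p.1}

lemma S_finite (n : ℕ) : (S n).Finite := by
  apply Set.Finite.subset (finite_bounded n n)
  rintro x ⟨hg, hl⟩
  exact ⟨hl, fun a ha => hl ▸ hg.bounded a ha⟩

lemma hd_lt_of_mem_S {n : ℕ} {x : List ℕ} (h : x ∈ S n) : hd x < n := by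
  obtain ⟨hg, hl⟩ := h
  have := hg.ne_nil
  cases x with
  | nil => simp at this
  | cons a t => exact hl ▸ hg.bounded a (by simp)

lemma Dp_finite (n : ℕ) : (Dp n).Finite := by
  apply Set.Finite.subset ((S_finite n).prod (Set.finite_Iio n))
  rintro ⟨x, m⟩ ⟨hx, _, _, hm⟩
  exact ⟨hx, lt_trans hm (hd_lt_of_mem_S hx)⟩

lemma Vq_finite (n : ℕ) : (Vq n).Finite := by
  apply Set.Finite.subset ((S_finite n).prod (Set.finite_Iio n))
  rintro ⟨x, m⟩ ⟨hx, _, _, hm⟩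
  exact ⟨hx, lt_trans hm (hd_lt_of_mem_S hx)⟩


lemma flg_cons (a : ℕ) {x : List ℕ} (hx : x ≠ []) : flg (a :: x) ↔ a = hd x + 1 := by
  obtain ⟨b, t, rfl⟩ := List.exists_cons_of_ne_nil hx
  exact Iff.rfl

lemma mem_S_cons {n : ℕ} {x : List ℕ} (hx : x ∈ S n) {m : ℕ} (h1 : m ≤ hd x + 1)
    (h2 : m < hd x → rstart x ≤ m) (h3 : flg x → hd x ≤ m) : (m :: x) ∈ S (n + 1) :=
  ⟨Gd.cons m x hx.1 h1 h2 h3, by simp [hx.2]⟩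

lemma S_succ {n : ℕ} (hn : 1 ≤ n) :
    S (n + 1) = (fun x => hd x :: x) '' S n ∪
      ((fun x => (hd x + 1) :: x) '' S n ∪ (fun p : List ℕ × ℕ => p.2 :: p.1) '' Dp n) := by
  ext y
  constructor
  · rintro ⟨hg, hl⟩
    obtain ⟨m, x, rfl⟩ : ∃ m x, y = m :: x := by
      cases y with
      | nil => simp at hl
      | cons a t => exact ⟨a, t, rfl⟩
    have hxne : x ≠ [] := by
      intro h; rw [h] at hl; simp at hl; omega
    obtain ⟨hgx, h1, h2, h3⟩ := hg.inv hxne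
    have hxS : x ∈ S n := ⟨hgx, by simpa using hl⟩
    rcases lt_trichotomy m (hd x) with hlt | heq | hgt
    · right; right
      refine ⟨(x, m), ⟨hxS, ?_, h2 hlt, hlt⟩, rfl⟩
      intro hf; exact absurd (h3 hf) (by omega)
    · left; exact ⟨x, hxS, by rw [heq]⟩
    · right; left
      have : m = hd x + 1 := by omega
      exact ⟨x, hxS, by rw [this]⟩
  · rintro (⟨x, hxS, rfl⟩ | ⟨x, hxS, rfl⟩ | ⟨⟨x, m⟩, ⟨hxS, hnf, hr, hm⟩, rfl⟩)
    · exact mem_S_cons hxS (by omega) (by omega) (fun _ => le_refl _)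
    · exact mem_S_cons hxS (le_refl _) (by omega) (fun _ => by omega)
    · exact mem_S_cons hxS (by omega) (fun _ => hr) (fun hf => absurd hf hnf)

lemma flg_cons_hd {x : List ℕ} (hx : x ≠ []) : ¬ flg (hd x :: x) := by
  rw [flg_cons _ hx]; omega

lemma flg_cons_hd1 {x : List ℕ} (hx : x ≠ []) : flg ((hd x + 1) :: x) := by
  rw [flg_cons _ hx]

lemma flg_cons_lt {m : ℕ} {x : List ℕ} (hx : x ≠ []) (hm : m < hd x) : ¬ flg (m :: x) := by
  rw [flg_cons _ hx]; omega

lemma rstart_cons_hd {x : List ℕ} (hx : x ≠ []) : rstart (hd x :: x) = rstart x := by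
  rw [rstart_cons _ hx]; simp

lemma rstart_cons_hd1 {x : List ℕ} (hx : x ≠ []) : rstart ((hd x + 1) :: x) = rstart x := by
  rw [rstart_cons _ hx]; simp

lemma rstart_cons_lt {m : ℕ} {x : List ℕ} (hx : x ≠ []) (hm : m < hd x) :
    rstart (m :: x) = m := by
  rw [rstart_cons _ hx, if_pos hm]

lemma ne_nil_of_mem_S {n : ℕ} {x : List ℕ} (hx : x ∈ S n) : x ≠ [] := hx.1.ne_nil

lemma Dp_succ {n : ℕ} (hn : 1 ≤ n) :
    Dp (n + 1) = (fun p : List ℕ × ℕ => (hd p.1 :: p.1, p.2)) '' (Dp n ∪ Vq n) := by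
  ext ⟨y, m⟩
  constructor
  · rintro ⟨hyS, hnf, hr, hm⟩
    rw [S_succ hn] at hyS
    rcases hyS with ⟨x, hxS, rfl⟩ | ⟨x, hxS, rfl⟩ | ⟨⟨x, m'⟩, ⟨hxS, _, hr', hm'⟩, rfl⟩
    · have hxne := ne_nil_of_mem_S hxS
      rw [rstart_cons_hd hxne] at hr
      have hhd : hd (hd x :: x) = hd x := rfl
      rw [hhd] at hm
      by_cases hf : flg x
      · exact ⟨(x, m), Or.inr ⟨hxS, hf, hr, hm⟩, rfl⟩
      · exact ⟨(x, m), Or.inl ⟨hxS, hf, hr, hm⟩, rfl⟩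
    · exact absurd (flg_cons_hd1 (ne_nil_of_mem_S hxS)) hnf
    · exfalso
      have hxS2 : x ∈ S n := hxS
      have hm2 : m' < hd x := hm'
      have hxne := ne_nil_of_mem_S hxS2
      have hr3 : rstart (m' :: x) ≤ m := hr
      have hm3 : m < hd (m' :: x) := hm
      rw [rstart_cons_lt hxne hm2] at hr3
      have hh : hd (m' :: x) = m' := rfl
      rw [hh] at hm3
      omega
  · rintro ⟨⟨x, m'⟩, hp, heq⟩
    simp only [Prod.mk.injEq] at heq
    obtain ⟨rfl, rfl⟩ := heq
    have hxS : x ∈ S n := by rcases hp with h | h <;> exact h.1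
    have hcond : rstart x ≤ m' ∧ m' < hd x := by
      rcases hp with h | h <;> exact ⟨h.2.2.1, h.2.2.2⟩
    have hxne := ne_nil_of_mem_S hxS
    refine ⟨mem_S_cons hxS (by omega) (by omega) (fun _ => le_refl _),
      flg_cons_hd hxne, ?_, ?_⟩
    · rw [rstart_cons_hd hxne]; exact hcond.1
    · exact hcond.2

lemma Vq_succ {n : ℕ} (hn : 1 ≤ n) :
    Vq (n + 1) = (fun p : List ℕ × ℕ => ((hd p.1 + 1) :: p.1, p.2)) '' (Dp n ∪ Vq n) ∪
      (fun x => ((hd x + 1) :: x, hd x)) '' S n := by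
  ext ⟨y, m⟩
  constructor
  · rintro ⟨hyS, hf, hr, hm⟩
    rw [S_succ hn] at hyS
    rcases hyS with ⟨x, hxS, rfl⟩ | ⟨x, hxS, rfl⟩ | ⟨⟨x, m'⟩, ⟨hxS, _, hr', hm'⟩, rfl⟩
    · exact absurd hf (flg_cons_hd (ne_nil_of_mem_S hxS))
    · have hxne := ne_nil_of_mem_S hxS
      rw [rstart_cons_hd1 hxne] at hr
      have hhd : hd ((hd x + 1) :: x) = hd x + 1 := rfl
      rw [hhd] at hm
      by_cases hlt : m < hd x
      · left
        by_cases hfx : flg x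
        · exact ⟨(x, m), Or.inr ⟨hxS, hfx, hr, hlt⟩, rfl⟩
        · exact ⟨(x, m), Or.inl ⟨hxS, hfx, hr, hlt⟩, rfl⟩
      · right
        have : m = hd x := by omega
        exact ⟨x, hxS, by rw [this]⟩
    · have hxS2 : x ∈ S n := hxS
      have hm2 : m' < hd x := hm'
      have hf2 : flg (m' :: x) := hf
      exact absurd hf2 (flg_cons_lt (ne_nil_of_mem_S hxS2) hm2)
  · rintro (⟨⟨x, m'⟩, hp, heq⟩ | ⟨x, hxS, heq⟩)
    · simp only [Prod.mk.injEq] at heq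
      obtain ⟨rfl, rfl⟩ := heq
      have hxS : x ∈ S n := by rcases hp with h | h <;> exact h.1
      have hcond : rstart x ≤ m' ∧ m' < hd x := by
        rcases hp with h | h <;> exact ⟨h.2.2.1, h.2.2.2⟩
      have hxne := ne_nil_of_mem_S hxS
      refine ⟨mem_S_cons hxS (le_refl _) (by omega) (fun _ => by omega),
        flg_cons_hd1 hxne, ?_, ?_⟩
      · rw [rstart_cons_hd1 hxne]; exact hcond.1
      · show m' < hd ((hd x + 1) :: x); show m' < hd x + 1; omega
    · simp only [Prod.mk.injEq] at heq
      obtain ⟨rfl, rfl⟩ := heq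
      have hxne := ne_nil_of_mem_S hxS
      refine ⟨mem_S_cons hxS (le_refl _) (by omega) (fun _ => by omega),
        flg_cons_hd1 hxne, ?_, ?_⟩
      · rw [rstart_cons_hd1 hxne]; exact hxS.1.rstart_le_hd
      · show hd x < hd x + 1; omega

lemma inj_cons_hd : Function.Injective (fun x : List ℕ => hd x :: x) := by
  intro a b h
  simpa using congrArg List.tail h

lemma inj_cons_hd1 : Function.Injective (fun x : List ℕ => (hd x + 1) :: x) := by
  intro a b h
  simpa using congrArg List.tail h

lemma inj_cons_pair : Function.Injective (fun p : List ℕ × ℕ => p.2 :: p.1) := by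
  rintro ⟨a, b⟩ ⟨c, d⟩ h
  simp only [List.cons.injEq] at h
  rw [Prod.mk.injEq]
  exact ⟨h.2, h.1⟩

lemma inj_pair_hd : Function.Injective (fun p : List ℕ × ℕ => (hd p.1 :: p.1, p.2)) := by
  rintro ⟨a, b⟩ ⟨c, d⟩ h
  simp only [Prod.mk.injEq, List.cons.injEq] at h
  rw [Prod.mk.injEq]
  exact ⟨h.1.2, h.2⟩

lemma inj_pair_hd1 : Function.Injective (fun p : List ℕ × ℕ => ((hd p.1 + 1) :: p.1, p.2)) := by
  rintro ⟨a, b⟩ ⟨c, d⟩ h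
  simp only [Prod.mk.injEq, List.cons.injEq] at h
  rw [Prod.mk.injEq]
  exact ⟨h.1.2, h.2⟩

lemma disjoint_Dp_Vq (n : ℕ) : Disjoint (Dp n) (Vq n) := by
  rw [Set.disjoint_left]
  rintro ⟨x, m⟩ ⟨_, hnf, _⟩ ⟨_, hf, _⟩
  exact hnf hf

lemma card_union_Dp_Vq (n : ℕ) :
    (Dp n ∪ Vq n).ncard = (Dp n).ncard + (Vq n).ncard :=
  Set.ncard_union_eq (disjoint_Dp_Vq n) (Dp_finite n) (Vq_finite n)

lemma card_S_succ {n : ℕ} (hn : 1 ≤ n) :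
    (S (n + 1)).ncard = 2 * (S n).ncard + (Dp n).ncard := by
  rw [S_succ hn]
  have hfin1 : ((fun x => hd x :: x) '' S n).Finite := (S_finite n).image _
  have hfin2 : ((fun x => (hd x + 1) :: x) '' S n).Finite := (S_finite n).image _
  have hfin3 : ((fun p : List ℕ × ℕ => p.2 :: p.1) '' Dp n).Finite := (Dp_finite n).image _
  have hd12 : Disjoint ((fun x => hd x :: x) '' S n) ((fun x => (hd x + 1) :: x) '' S n) := by
    rw [Set.disjoint_left]
    rintro y ⟨x, hx, rfl⟩ ⟨x', hx', heq⟩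
    simp only [List.cons.injEq] at heq
    obtain ⟨h1, rfl⟩ := heq
    omega
  have hd13 : Disjoint ((fun x => hd x :: x) '' S n)
      ((fun p : List ℕ × ℕ => p.2 :: p.1) '' Dp n) := by
    rw [Set.disjoint_left]
    rintro y ⟨x, hx, rfl⟩ ⟨⟨x', m'⟩, hp', heq⟩
    have hm' : m' < hd x' := hp'.2.2.2
    simp only [List.cons.injEq] at heq
    obtain ⟨h1, h2⟩ := heq
    rw [h2] at hm'
    omega
  have hd23 : Disjoint ((fun x => (hd x + 1) :: x) '' S n)
      ((fun p : List ℕ × ℕ => p.2 :: p.1) '' Dp n) := by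
    rw [Set.disjoint_left]
    rintro y ⟨x, hx, rfl⟩ ⟨⟨x', m'⟩, hp', heq⟩
    have hm' : m' < hd x' := hp'.2.2.2
    simp only [List.cons.injEq] at heq
    obtain ⟨h1, h2⟩ := heq
    rw [h2] at hm'
    omega
  rw [Set.ncard_union_eq (Set.disjoint_union_right.mpr ⟨hd12, hd13⟩) hfin1 (hfin2.union hfin3),
    Set.ncard_union_eq hd23 hfin2 hfin3,
    Set.ncard_image_of_injOn (inj_cons_hd.injOn),
    Set.ncard_image_of_injOn (inj_cons_hd1.injOn),
    Set.ncard_image_of_injOn (inj_cons_pair.injOn)]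
  ring

lemma card_Dp_succ {n : ℕ} (hn : 1 ≤ n) :
    (Dp (n + 1)).ncard = (Dp n).ncard + (Vq n).ncard := by
  rw [Dp_succ hn, Set.ncard_image_of_injOn (inj_pair_hd.injOn), card_union_Dp_Vq]

lemma card_Vq_succ {n : ℕ} (hn : 1 ≤ n) :
    (Vq (n + 1)).ncard = ((Dp n).ncard + (Vq n).ncard) + (S n).ncard := by
  rw [Vq_succ hn]
  have hfin1 : ((fun p : List ℕ × ℕ => ((hd p.1 + 1) :: p.1, p.2)) '' (Dp n ∪ Vq n)).Finite :=
    ((Dp_finite n).union (Vq_finite n)).image _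
  have hfin2 : ((fun x => ((hd x + 1) :: x, hd x)) '' S n).Finite := (S_finite n).image _
  have hdisj : Disjoint ((fun p : List ℕ × ℕ => ((hd p.1 + 1) :: p.1, p.2)) '' (Dp n ∪ Vq n))
      ((fun x => ((hd x + 1) :: x, hd x)) '' S n) := by
    rw [Set.disjoint_left]
    rintro y ⟨⟨x, m⟩, hp, rfl⟩ ⟨x', hx', heq⟩
    have hm : m < hd x := by rcases hp with h | h <;> exact h.2.2.2
    simp only [Prod.mk.injEq, List.cons.injEq] at heq
    obtain ⟨⟨h1, rfl⟩, h3⟩ := heq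
    omega
  have hinj2 : Set.InjOn (fun x => ((hd x + 1) :: x, hd x)) (S n) := by
    intro a _ b _ h
    simp only [Prod.mk.injEq, List.cons.injEq] at h
    exact h.1.2
  rw [Set.ncard_union_eq hdisj hfin1 hfin2,
    Set.ncard_image_of_injOn (inj_pair_hd1.injOn),
    Set.ncard_image_of_injOn hinj2, card_union_Dp_Vq]

lemma S_one : S 1 = {[0]} := by
  ext x
  constructor
  · rintro ⟨hg, hl⟩
    cases hg with
    | base => rfl
    | cons m x hx _ _ _ =>
      exfalso
      have h0 := hx.ne_nil
      have h1 : x.length = 0 := by simpa using hl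
      exact h0 (List.length_eq_zero_iff.mp h1)
  · rintro rfl
    exact ⟨Gd.base, rfl⟩

lemma card_S_one : (S 1).ncard = 1 := by rw [S_one]; simp

lemma Dp_one : Dp 1 = ∅ := by
  ext ⟨x, m⟩
  simp only [Set.mem_empty_iff_false, iff_false]
  rintro ⟨hx, _, hr, hm⟩
  rw [S_one] at hx
  rcases hx with rfl
  simp [hd] at hm

lemma Vq_one : Vq 1 = ∅ := by
  ext ⟨x, m⟩
  simp only [Set.mem_empty_iff_false, iff_false]
  rintro ⟨hx, _, hr, hm⟩
  rw [S_one] at hx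
  rcases hx with rfl
  simp [hd] at hm

lemma main_count : ∀ k : ℕ, (S (k + 2)).ncard = Nat.fib (2 * k + 2) + 1 ∧
    (Dp (k + 2)).ncard = Nat.fib (2 * k + 1) - 1 ∧ (Vq (k + 2)).ncard = Nat.fib (2 * k + 2) := by
  intro k
  induction k with
  | zero =>
    have h1 : (S 2).ncard = 2 := by
      rw [card_S_succ (le_refl 1), card_S_one, Dp_one]; simp
    have h2 : (Dp 2).ncard = 0 := by
      rw [card_Dp_succ (le_refl 1), Dp_one, Vq_one]; simp
    have h3 : (Vq 2).ncard = 1 := by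
      rw [card_Vq_succ (le_refl 1), Dp_one, Vq_one, card_S_one]; simp
    refine ⟨?_, ?_, ?_⟩ <;> simp [h1, h2, h3]
  | succ k ih =>
    obtain ⟨hs, hdp, hvq⟩ := ih
    have hk : 1 ≤ k + 2 := by omega
    have f1 : Nat.fib (2 * k + 3) = Nat.fib (2 * k + 1) + Nat.fib (2 * k + 2) :=
      Nat.fib_add_two
    have f2 : Nat.fib (2 * k + 4) = Nat.fib (2 * k + 2) + Nat.fib (2 * k + 3) :=
      Nat.fib_add_two
    have fpos : 1 ≤ Nat.fib (2 * k + 1) := Nat.fib_pos.mpr (by omega)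
    have e1 : (S (k + 3)).ncard = 2 * (S (k + 2)).ncard + (Dp (k + 2)).ncard :=
      card_S_succ hk
    have e2 : (Dp (k + 3)).ncard = (Dp (k + 2)).ncard + (Vq (k + 2)).ncard :=
      card_Dp_succ hk
    have e3 : (Vq (k + 3)).ncard = ((Dp (k + 2)).ncard + (Vq (k + 2)).ncard) + (S (k + 2)).ncard :=
      card_Vq_succ hk
    have g1 : 2 * (k + 1) + 2 = 2 * k + 4 := by ring
    have g2 : 2 * (k + 1) + 1 = 2 * k + 3 := by ring
    have g3 : k + 1 + 2 = k + 3 := by ring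
    rw [g1, g2, g3]
    refine ⟨?_, ?_, ?_⟩ <;> omega

lemma card_S (n : ℕ) (hn : 1 ≤ n) : (S n).ncard = Nat.fib (2 * (n - 1)) + 1 := by
  rcases Nat.lt_or_ge n 2 with h | h
  · interval_cases n
    · simpa using card_S_one
  · obtain ⟨k, rfl⟩ : ∃ k, n = k + 2 := ⟨n - 2, by omega⟩
    have h2 : 2 * (k + 2 - 1) = 2 * k + 2 := by omega
    rw [h2]
    exact (main_count k).1

/-- decode a reversed list into a length-normalized word `ℕ → ℕ`. -/
def dec (x : List ℕ) : ℕ → ℕ := fun i =>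
  if i < x.length then x.getD (x.length - 1 - i) 0 else 0

lemma dec_ge (x : List ℕ) {i : ℕ} (hi : x.length ≤ i) : dec x i = 0 :=
  if_neg (by omega)

lemma dec_lt (x : List ℕ) {i : ℕ} (hi : i < x.length) :
    dec x i = x.getD (x.length - 1 - i) 0 := if_pos hi

lemma getD_zero {x : List ℕ} (hx : x ≠ []) : x.getD 0 0 = hd x := by
  cases x with
  | nil => exact absurd rfl hx
  | cons a t => rfl

lemma dec_cons_lt (m : ℕ) {x : List ℕ} {i : ℕ} (hi : i < x.length) :
    dec (m :: x) i = dec x i := by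
  rw [dec_lt _ (by simp only [List.length_cons]; omega), dec_lt _ hi]
  have h : (m :: x).length - 1 - i = (x.length - 1 - i) + 1 := by
    simp only [List.length_cons]; omega
  rw [h, List.getD_cons_succ]

lemma dec_cons_self (m : ℕ) (x : List ℕ) : dec (m :: x) x.length = m := by
  rw [dec_lt _ (by simp)]
  have h : (m :: x).length - 1 - x.length = 0 := by simp
  rw [h]; rfl

lemma dec_last {x : List ℕ} (hx : x ≠ []) : dec x (x.length - 1) = hd x := by
  have h1 : 0 < x.length := List.length_pos_iff.mpr hx
  rw [dec_lt _ (by omega)]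
  have h : x.length - 1 - (x.length - 1) = 0 := by omega
  rw [h, getD_zero hx]

lemma dec_getD {x : List ℕ} {j : ℕ} (hj : j < x.length) :
    dec x (x.length - 1 - j) = x.getD j 0 := by
  rw [dec_lt _ (by omega)]
  congr 1
  omega

lemma dec_second {x : List ℕ} (hx : 2 ≤ x.length) :
    dec x (x.length - 2) = x.getD 1 0 := by
  rw [dec_lt _ (by omega)]
  congr 1
  omega

lemma flg_iff {x : List ℕ} (hx : x ≠ []) :
    flg x ↔ 2 ≤ x.length ∧ dec x (x.length - 1) = dec x (x.length - 2) + 1 := by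
  cases x with
  | nil => exact absurd rfl hx
  | cons a t =>
    cases t with
    | nil =>
      simp only [flg]
      constructor
      · intro h; exact absurd h (by exact id)
      · rintro ⟨h2, _⟩; simp at h2
    | cons b r =>
      have hne : (a :: b :: r : List ℕ) ≠ [] := by simp
      have h2 : 2 ≤ (a :: b :: r).length := by simp
      rw [dec_last hne, dec_second h2]
      have e1 : hd (a :: b :: r) = a := rfl
      have e2 : (a :: b :: r).getD 1 0 = b := rfl
      rw [e1, e2]
      constructor
      · intro h; exact ⟨h2, h⟩
      · rintro ⟨_, h⟩; exact h

lemma runStart_cons_iff (m : ℕ) (t : List ℕ) {j : ℕ} (hj : j < t.length) :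
    IsRunStart (t.length + 1) (dec (m :: t)) j ↔ IsRunStart t.length (dec t) j := by
  unfold IsRunStart
  constructor
  · rintro ⟨_, h⟩
    refine ⟨hj, ?_⟩
    rcases h with h | h
    · exact Or.inl h
    · right
      rwa [dec_cons_lt m hj, dec_cons_lt m (by omega : j - 1 < t.length)] at h
  · rintro ⟨_, h⟩
    refine ⟨by omega, ?_⟩
    rcases h with h | h
    · exact Or.inl h
    · right
      rwa [dec_cons_lt m hj, dec_cons_lt m (by omega : j - 1 < t.length)]

lemma rstart_spec : ∀ {x : List ℕ}, x ≠ [] →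
    ∃ k, k < x.length ∧ IsRunStart x.length (dec x) k ∧
      (∀ j, IsRunStart x.length (dec x) j → j ≤ k) ∧ dec x k = rstart x := by
  intro x
  induction x with
  | nil => intro h; exact absurd rfl h
  | cons m t ih =>
    intro _
    cases t with
    | nil =>
      refine ⟨0, by simp, ⟨by simp, Or.inl rfl⟩, ?_, ?_⟩
      · intro j hj
        have := hj.1
        simp only [List.length_cons, List.length_nil] at this
        omega
      · rfl
    | cons b r =>
      set t := b :: r with ht
      have htne : t ≠ [] := by simp [ht]
      have hlen : 0 < t.length := List.length_pos_iff.mpr htne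
      obtain ⟨k, hk, hkrs, hkmax, hkval⟩ := ih htne
      have hlc : (m :: t).length = t.length + 1 := rfl
      by_cases hlt : m < hd t
      · refine ⟨t.length, by simp, ⟨by simp, Or.inr ?_⟩, ?_, ?_⟩
        · rw [dec_cons_self, dec_cons_lt m (by omega : t.length - 1 < t.length),
            dec_last htne]
          exact hlt
        · intro j hj
          have := hj.1
          rw [hlc] at this
          omega
        · rw [dec_cons_self, rstart_cons_lt htne hlt]
      · refine ⟨k, by rw [hlc]; omega, ?_, ?_, ?_⟩
        · rw [hlc]
          exact (runStart_cons_iff m t hk).mpr hkrs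
        · intro j hj
          rw [hlc] at hj
          have hjlt : j < t.length + 1 := hj.1
          by_cases hjn : j < t.length
          · exact hkmax j ((runStart_cons_iff m t hjn).mp hj)
          · exfalso
            have hje : j = t.length := by omega
            subst hje
            rcases hj.2 with h | h
            · omega
            · rw [dec_cons_self, dec_cons_lt m (by omega : t.length - 1 < t.length),
                dec_last htne] at h
              exact hlt h
        · rw [dec_cons_lt m hk, hkval, rstart_cons m htne, if_neg hlt]

/-- no short peak, spelled out. -/
def NoPeak (n : ℕ) (w : ℕ → ℕ) : Prop :=
  ∀ i, i + 2 < n → w (i + 1) = w i + 1 → ¬ w (i + 2) ≤ w i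

lemma catalan_cons_iff (m : ℕ) {t : List ℕ} (ht : t ≠ []) :
    IsCatalanWord (t.length + 1) (dec (m :: t)) ↔
      IsCatalanWord t.length (dec t) ∧ m ≤ hd t + 1 := by
  have hlen : 0 < t.length := List.length_pos_iff.mpr ht
  constructor
  · rintro ⟨h0, hstep, _⟩
    refine ⟨⟨?_, ?_, ?_⟩, ?_⟩
    · rwa [dec_cons_lt m hlen] at h0
    · intro i hi
      have := hstep i (by omega)
      rwa [dec_cons_lt m (by omega : i + 1 < t.length),
        dec_cons_lt m (by omega : i < t.length)] at this
    · intro i hi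
      exact dec_ge t hi
    · have := hstep (t.length - 1) (by omega)
      have i1 : t.length - 1 + 1 = t.length := by omega
      rw [i1, dec_cons_self, dec_cons_lt m (by omega : t.length - 1 < t.length),
        dec_last ht] at this
      exact this
  · rintro ⟨⟨h0, hstep, _⟩, hm⟩
    refine ⟨?_, ?_, ?_⟩
    · rw [dec_cons_lt m hlen]; exact h0
    · intro i hi
      by_cases h : i + 1 < t.length
      · rw [dec_cons_lt m h, dec_cons_lt m (by omega : i < t.length)]
        exact hstep i h
      · have he : i + 1 = t.length := by omega
        rw [he, dec_cons_self, dec_cons_lt m (by omega : i < t.length)]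
        have hi2 : i = t.length - 1 := by omega
        rw [hi2, dec_last ht]
        exact hm
    · intro i hi
      exact dec_ge (m :: t) (by simp only [List.length_cons]; omega)

lemma nopeak_cons_iff (m : ℕ) {t : List ℕ} (ht : t ≠ []) :
    NoPeak (t.length + 1) (dec (m :: t)) ↔
      NoPeak t.length (dec t) ∧ (flg t → hd t ≤ m) := by
  have hlen : 0 < t.length := List.length_pos_iff.mpr ht
  constructor
  · intro H
    constructor
    · intro i h2 hasc hle
      refine H i (by omega) ?_ ?_
      · rw [dec_cons_lt m (by omega : i + 1 < t.length),
          dec_cons_lt m (by omega : i < t.length)]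
        exact hasc
      · rw [dec_cons_lt m (by omega : i + 2 < t.length),
          dec_cons_lt m (by omega : i < t.length)]
        exact hle
    · intro hf
      rw [flg_iff ht] at hf
      obtain ⟨h2, hstep⟩ := hf
      by_contra hlt
      push_neg at hlt
      refine H (t.length - 2) (by omega) ?_ ?_
      · have i1 : t.length - 2 + 1 = t.length - 1 := by omega
        rw [i1, dec_cons_lt m (by omega : t.length - 1 < t.length),
          dec_cons_lt m (by omega : t.length - 2 < t.length)]
        exact hstep
      · have i2 : t.length - 2 + 2 = t.length := by omega
        rw [i2, dec_cons_self, dec_cons_lt m (by omega : t.length - 2 < t.length)]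
        have hlast : dec t (t.length - 1) = hd t := dec_last ht
        omega
  · rintro ⟨H, Hf⟩ i h2 hasc hle
    by_cases hi : i + 2 < t.length
    · rw [dec_cons_lt m (by omega : i + 1 < t.length),
        dec_cons_lt m (by omega : i < t.length)] at hasc
      rw [dec_cons_lt m hi, dec_cons_lt m (by omega : i < t.length)] at hle
      exact H i hi hasc hle
    · have he : i + 2 = t.length := by omega
      rw [dec_cons_lt m (by omega : i + 1 < t.length),
        dec_cons_lt m (by omega : i < t.length)] at hasc
      rw [he, dec_cons_self, dec_cons_lt m (by omega : i < t.length)] at hle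
      have hflg : flg t := by
        rw [flg_iff ht]
        refine ⟨by omega, ?_⟩
        have e1 : t.length - 1 = i + 1 := by omega
        have e2 : t.length - 2 = i := by omega
        rw [e1, e2]
        exact hasc
      have hm := Hf hflg
      have hlast : dec t (t.length - 1) = hd t := dec_last ht
      have e1 : t.length - 1 = i + 1 := by omega
      rw [e1] at hlast
      omega

lemma flattened_cons_iff (m : ℕ) {t : List ℕ} (ht : t ≠ []) :
    IsFlattened (t.length + 1) (dec (m :: t)) ↔
      IsFlattened t.length (dec t) ∧ (m < hd t → rstart t ≤ m) := by
  have hlen : 0 < t.length := List.length_pos_iff.mpr ht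
  obtain ⟨k, hk, hkrs, hkmax, hkval⟩ := rstart_spec ht
  constructor
  · intro H
    constructor
    · intro i j hi hj hij
      have hi' := (runStart_cons_iff m t hi.1).mpr hi
      have hj' := (runStart_cons_iff m t hj.1).mpr hj
      have := H i j hi' hj' hij
      rwa [dec_cons_lt m hi.1, dec_cons_lt m hj.1] at this
    · intro hm
      have hn : IsRunStart (t.length + 1) (dec (m :: t)) t.length := by
        refine ⟨by omega, Or.inr ?_⟩
        rw [dec_cons_self, dec_cons_lt m (by omega : t.length - 1 < t.length),
          dec_last ht]
        exact hm
      have hk' := (runStart_cons_iff m t hk).mpr hkrs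
      have := H k t.length hk' hn (by omega)
      rwa [dec_cons_self, dec_cons_lt m hk, hkval] at this
  · rintro ⟨Hf, Hm⟩ i j hi hj hij
    have hjlt : j < t.length + 1 := hj.1
    by_cases hjn : j < t.length
    · have hiin : i < t.length := by omega
      have hi' := (runStart_cons_iff m t hiin).mp hi
      have hj' := (runStart_cons_iff m t hjn).mp hj
      rw [dec_cons_lt m hiin, dec_cons_lt m hjn]
      exact Hf i j hi' hj' hij
    · have hjeq : j = t.length := by omega
      subst hjeq
      by_cases hin : i < t.length
      · have hdrop : dec (m :: t) t.length < dec (m :: t) (t.length - 1) := by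
          rcases hj.2 with h | h
          · omega
          · exact h
        rw [dec_cons_self, dec_cons_lt m (by omega : t.length - 1 < t.length),
          dec_last ht] at hdrop
        have hi' := (runStart_cons_iff m t hin).mp hi
        have h1 : dec t i ≤ dec t k := Hf i k hi' hkrs (hkmax i hi')
        rw [dec_cons_lt m hin, dec_cons_self]
        rw [hkval] at h1
        exact le_trans h1 (Hm hdrop)
      · have : i = t.length := by omega
        subst this
        exact le_refl _

lemma Gd_singleton {m : ℕ} : Gd [m] ↔ m = 0 := by
  constructor
  · intro h
    cases h with
    | base => rfl
    | cons m x hx _ _ _ => exact (hx.ne_nil rfl).elim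
  · rintro rfl
    exact Gd.base

lemma dec_singleton (m : ℕ) : dec [m] 0 = m := rfl

lemma good_singleton (m : ℕ) :
    (IsCatalanWord 1 (dec [m]) ∧ IsFlattened 1 (dec [m]) ∧ NoPeak 1 (dec [m])) ↔ m = 0 := by
  constructor
  · rintro ⟨⟨h0, _, _⟩, _, _⟩
    rw [dec_singleton] at h0
    exact h0
  · rintro rfl
    refine ⟨⟨rfl, ?_, ?_⟩, ?_, ?_⟩
    · intro i hi; omega
    · intro i hi; exact dec_ge [0] (by simpa using hi)
    · intro i j hi hj hij
      have h1 : i < 1 := hi.1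
      have h2 : j < 1 := hj.1
      have : i = j := by omega
      rw [this]
    · intro i hi; omega

lemma bridge : ∀ {x : List ℕ}, x ≠ [] →
    (Gd x ↔ IsCatalanWord x.length (dec x) ∧ IsFlattened x.length (dec x) ∧
      NoPeak x.length (dec x)) := by
  intro x
  induction x with
  | nil => intro h; exact absurd rfl h
  | cons m t ih =>
    intro _
    cases t with
    | nil => exact Gd_singleton.trans (good_singleton m).symm
    | cons b r =>
      set t := b :: r with ht
      have htne : t ≠ [] := by simp [ht]
      have hlc : (m :: t).length = t.length + 1 := rfl
      rw [hlc]
      constructor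
      · intro h
        obtain ⟨hgt, h1, h2, h3⟩ := h.inv htne
        obtain ⟨c1, c2, c3⟩ := (ih htne).mp hgt
        refine ⟨?_, ?_, ?_⟩
        · exact (catalan_cons_iff m htne).mpr ⟨c1, h1⟩
        · exact (flattened_cons_iff m htne).mpr ⟨c2, h2⟩
        · exact (nopeak_cons_iff m htne).mpr ⟨c3, h3⟩
      · rintro ⟨c1, c2, c3⟩
        obtain ⟨d1, e1⟩ := (catalan_cons_iff m htne).mp c1
        obtain ⟨d2, e2⟩ := (flattened_cons_iff m htne).mp c2
        obtain ⟨d3, e3⟩ := (nopeak_cons_iff m htne).mp c3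
        exact Gd.cons m t ((ih htne).mpr ⟨d1, d2, d3⟩) e1 e2 e3

lemma lPeak_iff (n : ℕ) (w : ℕ → ℕ) : lPeakCount n w 1 = 0 ↔ NoPeak n w := by
  unfold lPeakCount
  have hfin : {i : ℕ | IsLPeak n w 1 i}.Finite := by
    apply Set.Finite.subset (Set.finite_Iio n)
    intro i hi
    have h1 := hi.1
    simp only [Set.mem_Iio]
    omega
  rw [Set.ncard_eq_zero hfin, Set.eq_empty_iff_forall_notMem]
  constructor
  · intro h i h2 hasc hle
    refine h i ⟨by omega, ?_, hle⟩
    intro t h1 h1'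
    have ht1 : t = 1 := by omega
    subst ht1
    exact hasc
  · intro h i hp
    obtain ⟨hlt, hall, hle⟩ := hp
    exact h i (by omega) (hall 1 (le_refl 1) (le_refl 1)) hle

lemma dec_injOn (n : ℕ) : Set.InjOn dec (S n) := by
  intro a ha b hb h
  have hal : a.length = n := ha.2
  have hbl : b.length = n := hb.2
  apply List.ext_getElem (by rw [hal, hbl])
  intro j h1 h2
  have hj : j < n := by omega
  have hc := congrFun h (n - 1 - j)
  have e1 : dec a (n - 1 - j) = a.getD j 0 := by
    have := dec_getD (x := a) (j := j) (by omega)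
    rwa [hal] at this
  have e2 : dec b (n - 1 - j) = b.getD j 0 := by
    have := dec_getD (x := b) (j := j) (by omega)
    rwa [hbl] at this
  rw [e1, e2, List.getD_eq_getElem _ _ h1, List.getD_eq_getElem _ _ h2] at hc
  exact hc

lemma dec_enc (n : ℕ) (hn : 1 ≤ n) (w : ℕ → ℕ) (hw : ∀ i, n ≤ i → w i = 0) :
    dec ((List.ofFn (fun j : Fin n => w j)).reverse) = w := by
  funext i
  have hl : (List.ofFn (fun j : Fin n => w j)).length = n := by simp
  have hlr : ((List.ofFn (fun j : Fin n => w j)).reverse).length = n := by simp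
  by_cases hi : i < n
  · have hidx : n - 1 - i < ((List.ofFn (fun j : Fin n => w j)).reverse).length := by omega
    have s1 : dec ((List.ofFn (fun j : Fin n => w j)).reverse) i =
        ((List.ofFn (fun j : Fin n => w j)).reverse).getD (n - 1 - i) 0 := by
      rw [dec_lt _ (by omega)]
      congr 1
      omega
    rw [s1, List.getD_eq_getElem _ _ hidx, List.getElem_reverse]
    have e : (List.ofFn (fun j : Fin n => w j)).length - 1 - (n - 1 - i) = i := by
      rw [hl]; omega
    have s2 : (List.ofFn (fun j : Fin n => w j))[(List.ofFn (fun j : Fin n => w j)).length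
        - 1 - (n - 1 - i)]'(by omega) = (List.ofFn (fun j : Fin n => w j))[i]'(by omega) := by
      congr 1
    rw [s2, List.getElem_ofFn]
  · rw [dec_ge _ (by omega), hw i (by omega)]

lemma T_eq (n : ℕ) (hn : 1 ≤ n) :
    {w ∈ FlatCat n | lPeakCount n w 1 = 0} = dec '' S n := by
  ext w
  simp only [Set.mem_setOf_eq, Set.mem_image]
  constructor
  · rintro ⟨⟨hcat, hflat⟩, hpeak⟩
    rw [lPeak_iff] at hpeak
    have hl : ((List.ofFn (fun j : Fin n => w j)).reverse).length = n := by simp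
    have hne : (List.ofFn (fun j : Fin n => w j)).reverse ≠ [] := by
      intro hcon
      rw [hcon] at hl
      simp at hl
      omega
    have hde := dec_enc n hn w hcat.2.2
    refine ⟨(List.ofFn (fun j : Fin n => w j)).reverse, ⟨?_, hl⟩, hde⟩
    rw [bridge hne, hl, hde]
    exact ⟨hcat, hflat, hpeak⟩
  · rintro ⟨x, hxS, rfl⟩
    have hxne := ne_nil_of_mem_S hxS
    have hxl : x.length = n := hxS.2
    obtain ⟨c1, c2, c3⟩ := (bridge hxne).mp hxS.1
    rw [hxl] at c1 c2 c3
    exact ⟨⟨c1, c2⟩, (lPeak_iff n _).mpr c3⟩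

end FCP


/-- For every `n ≥ 1`, the number of flattened Catalan words of length `n` with
no short peak (no `1`-peak) equals `F_{2(n-1)} + 1`, where `F` is the Fibonacci
sequence with `F_0 = 0`, `F_1 = F_2 = 1`. -/
theorem flatCat_no_short_peak_card (n : ℕ) (hn : 1 ≤ n) :
    {w ∈ FlatCat n | lPeakCount n w 1 = 0}.ncard =
      Nat.fib (2 * (n - 1)) + 1 := by
  rw [FCP.T_eq n hn, Set.ncard_image_of_injOn (FCP.dec_injOn n), FCP.card_S n hn]
end
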